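/- arXiv:2207.14759 — 8 statements merged into one kernel-verified Lean document; each statement's English description precedes it below -/
import Mathlib

section
/- A finite simple graph G satisfies p(G; z) = m(G; z) (the perfectly matchable set polynomial equals the matching polynomial) if and only if G contains no cycle of even length. -/
open Polynomial

variable {V : Type*}

/-- `M` (a finite set of edges) is a matching of the graph `G`:
its members are edges of `G` and no two distinct members share an endpoint. -/
def IsGraphMatching (G : SimpleGraph V) (M : Finset (Sym2 V)) : Prop :=
  (M : Set (Sym2 V)) ⊆ G.edgeSet ∧
    ∀ e ∈ M, ∀ f ∈ M, e ≠ f → ∀ x, x ∈ e → x ∉ f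

/-- The set of vertices covered by the edge set `M` is exactly `S`. -/
def Covers (M : Finset (Sym2 V)) (S : Finset V) : Prop :=
  ∀ x, x ∈ S ↔ ∃ e ∈ M, x ∈ e

/-- `M` is a perfect matching of the induced subgraph `G[S]`. -/
def IsPerfectMatchingOn (G : SimpleGraph V) (M : Finset (Sym2 V)) (S : Finset V) : Prop :=
  IsGraphMatching G M ∧ Covers M S

/-- `S` is a perfectly matchable set of `G`. -/
def IsPMS (G : SimpleGraph V) (S : Finset V) : Prop :=
  ∃ M, IsPerfectMatchingOn G M S

open Classical in
/-- The perfectly matchable set polynomial of the subgraph of `G` induced on the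
ground vertex set `A`: the generating function `∑ p_{2k} z^k` where `p_{2k}` is the number
of perfectly matchable sets `S ⊆ A` with `|S| = 2k`. -/
noncomputable def pmPoly [Fintype V] (G : SimpleGraph V) (A : Finset V) : Polynomial ℤ :=
  ∑ S ∈ A.powerset, if IsPMS G S then X ^ (S.card / 2) else 0

/-- `G` has no cycle of even length. -/
def NoEvenCycle (G : SimpleGraph V) : Prop :=
  ∀ (v : V) (c : G.Walk v v), c.IsCycle → ¬ Even c.length

open Classical in
/-- The matching polynomial `m(G; z) = ∑ m_k z^k`, where `m_k` is the number
of matchings of `G` with exactly `k` edges. -/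
noncomputable def matchPoly [Fintype V] [DecidableEq V] (G : SimpleGraph V) : Polynomial ℤ :=
  ∑ M : Finset (Sym2 V), if IsGraphMatching G M then X ^ M.card else 0

/-!
A matching `M` perfectly matches its vertex set `V(M)`, and `|V(M)| = 2|M|`. Hence `m(G; z)` is the
sum of `z ^ (|V(M)| / 2)` over all matchings, while `p(G; z)` sums the same monomials over the image
of `M ↦ V(M)`; evaluating at `z = 1` shows that the two agree iff `M ↦ V(M)` is injective, i.e. iff
every perfectly matchable set has a unique perfect matching.

Along an even cycle, the two classes of alternate edges are distinct perfect matchings of its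
vertex set. Conversely, if `M ≠ M'` cover the same vertices, every vertex of `M ∆ M'` meets one
edge of each, so `M ∆ M'` is a nonempty union of disjoint cycles; on each of them the edges of `M`
perfectly match the vertices, so the cycle is even.
-/

open Finset SimpleGraph
open scoped symmDiff

section Matchings

variable {G : SimpleGraph V} {M M' N : Finset (Sym2 V)}

lemma IsGraphMatching.eq_of_mem (hM : IsGraphMatching G M) {e f : Sym2 V} (he : e ∈ M)
    (hf : f ∈ M) {x : V} (hxe : x ∈ e) (hxf : x ∈ f) : e = f :=
  by_contra fun hef => hM.2 e he f hf hef x hxe hxf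

lemma IsGraphMatching.mono (hM : IsGraphMatching G M) (h : N ⊆ M) : IsGraphMatching G N :=
  ⟨(coe_subset.2 h).trans hM.1, fun e he f hf => hM.2 e (h he) f (h hf)⟩

lemma symmDiff_subset_edgeSet (hM : IsGraphMatching G M) (hM' : IsGraphMatching G M') :
    (↑M ∆ ↑M' : Set (Sym2 V)) ⊆ G.edgeSet :=
  Set.symmDiff_subset_union.trans (Set.union_subset hM.1 hM'.1)

variable [DecidableEq V] {S : Finset V}

def matchedVerts (M : Finset (Sym2 V)) : Finset V := M.biUnion Sym2.toFinset

lemma mem_matchedVerts {x : V} : x ∈ matchedVerts M ↔ ∃ e ∈ M, x ∈ e := by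
  simp [matchedVerts, Sym2.mem_toFinset]

lemma covers_iff_matchedVerts_eq : Covers M S ↔ matchedVerts M = S := by
  simp only [Covers, Finset.ext_iff, mem_matchedVerts, iff_comm]

lemma isPMS_iff : IsPMS G S ↔ ∃ M, IsGraphMatching G M ∧ matchedVerts M = S := by
  simp only [IsPMS, IsPerfectMatchingOn, covers_iff_matchedVerts_eq]

lemma IsGraphMatching.card_matchedVerts (hM : IsGraphMatching G M) :
    (matchedVerts M).card = 2 * M.card := by
  rw [matchedVerts, card_biUnion, sum_const_nat, mul_comm]
  · exact fun e he => Sym2.card_toFinset_of_not_isDiag e (G.not_isDiag_of_mem_edgeSet (hM.1 he))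
  · exact fun e he f hf hef => Finset.disjoint_left.2 fun x hxe hxf =>
      hM.2 e he f hf hef x (Sym2.mem_toFinset.1 hxe) (Sym2.mem_toFinset.1 hxf)

end Matchings

section EvenCycle

variable [DecidableEq V] {G : SimpleGraph V}

def consecutivePairs (x : ℕ → V) (r m : ℕ) : Finset (Sym2 V) :=
  (range m).image fun k => s(x (r + 2 * k), x (r + 2 * k + 1))

lemma matchedVerts_consecutivePairs (x : ℕ → V) (r m : ℕ) :
    matchedVerts (consecutivePairs x r m) = (Ico r (r + 2 * m)).image x := by
  ext y
  simp only [mem_matchedVerts, consecutivePairs, mem_image, mem_range, mem_Ico]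
  constructor
  · rintro ⟨_, ⟨k, hk, rfl⟩, hy⟩
    rcases Sym2.mem_iff.1 hy with rfl | rfl
    exacts [⟨r + 2 * k, by omega, rfl⟩, ⟨r + 2 * k + 1, by omega, rfl⟩]
  · rintro ⟨t, ht, rfl⟩
    refine ⟨_, ⟨(t - r) / 2, by omega, rfl⟩, ?_⟩
    rcases Nat.even_or_odd (t - r) with ⟨j, hj⟩ | ⟨j, hj⟩
    · exact Sym2.mem_iff.2 (Or.inl (congrArg x (by omega)))
    · exact Sym2.mem_iff.2 (Or.inr (congrArg x (by omega)))

variable {x : ℕ → V} {r m : ℕ}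

lemma isGraphMatching_consecutivePairs
    (hadj : ∀ k < m, G.Adj (x (r + 2 * k)) (x (r + 2 * k + 1)))
    (hinj : Set.InjOn x (Set.Ico r (r + 2 * m))) : IsGraphMatching G (consecutivePairs x r m) := by
  refine ⟨?_, ?_⟩
  · rintro _ he
    obtain ⟨k, hk, rfl⟩ := mem_image.1 he
    exact hadj k (mem_range.1 hk)
  · rintro _ he _ hf hef y hye hyf
    obtain ⟨k, hk, rfl⟩ := mem_image.1 he
    obtain ⟨l, hl, rfl⟩ := mem_image.1 hf
    rw [mem_range] at hk hl
    refine hef (congrArg (fun k => s(x (r + 2 * k), x (r + 2 * k + 1))) ?_)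
    rcases Sym2.mem_iff.1 hye with rfl | rfl <;> rcases Sym2.mem_iff.1 hyf with h | h <;>
    · have := hinj ⟨by omega, by omega⟩ ⟨by omega, by omega⟩ h
      omega

lemma exists_ne_matchedVerts_eq_of_isCycle {v : V} {c : G.Walk v v} (hc : c.IsCycle)
    (he : Even c.length) :
    ∃ M M', IsGraphMatching G M ∧ IsGraphMatching G M' ∧ matchedVerts M = matchedVerts M' ∧
      M ≠ M' := by
  obtain ⟨m, hm⟩ := he
  have h3 := hc.three_le_length
  refine ⟨consecutivePairs c.getVert 0 m, consecutivePairs c.getVert 1 m,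
    isGraphMatching_consecutivePairs (fun k hk => c.adj_getVert_succ (by omega))
      (hc.getVert_injOn'.mono fun i hi => by simp at hi ⊢; omega),
    isGraphMatching_consecutivePairs (fun k hk => c.adj_getVert_succ (by omega))
      (hc.getVert_injOn.mono fun i hi => by simp at hi ⊢; omega), ?_, ?_⟩
  · rw [matchedVerts_consecutivePairs, matchedVerts_consecutivePairs]
    ext y
    simp only [mem_image, mem_Ico]
    constructor
    · rintro ⟨t, ht, rfl⟩
      rcases Nat.eq_zero_or_pos t with rfl | ht0
      exacts [⟨c.length, by omega, by simp⟩, ⟨t, by omega, rfl⟩]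
    · rintro ⟨t, ht, rfl⟩
      rcases eq_or_ne t c.length with rfl | htn
      exacts [⟨0, by omega, by simp⟩, ⟨t, by omega, rfl⟩]
  · -- the first edge of the cycle has even position, and cannot reappear at an odd one
    intro h
    have h01 : s(c.getVert 0, c.getVert 1) ∈ consecutivePairs c.getVert 1 m :=
      h ▸ mem_image.2 ⟨0, by simp; omega, rfl⟩
    obtain ⟨k, hk, hkeq⟩ := mem_image.1 h01
    rcases Sym2.eq_iff.1 hkeq with ⟨h1, -⟩ | ⟨h1, h2⟩
    · have := (hc.getVert_endpoint_iff (i := 1 + 2 * k) (by simp at hk; omega)).1 (by simp [h1])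
      omega
    · have hk0 : 1 + 2 * k = 1 := hc.getVert_injOn (by simp at hk ⊢; omega) (by simp; omega) h1
      refine hc.getVert_sub_one_ne_getVert_add_one (i := 1) (by omega) ?_
      rw [← h2, hk0]

end EvenCycle

section SymmDiff

variable [DecidableEq V] {G : SimpleGraph V} {M M' : Finset (Sym2 V)}

lemma exists_mem_sdiff_of_adj_fromEdgeSet_symmDiff (hM : IsGraphMatching G M)
    (hM' : IsGraphMatching G M') (hS : matchedVerts M = matchedVerts M') {x y : V}
    (hxy : (fromEdgeSet (↑M ∆ ↑M' : Set (Sym2 V))).Adj x y) : ∃ e ∈ M \ M', x ∈ e := by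
  have hxy' := (fromEdgeSet_adj _).1 hxy
  have hx : x ∈ matchedVerts M := by
    rcases Set.mem_symmDiff.1 hxy'.1 with ⟨h, -⟩ | ⟨h, -⟩
    · exact mem_matchedVerts.2 ⟨_, h, Sym2.mem_mk_left x y⟩
    · exact hS ▸ mem_matchedVerts.2 ⟨_, h, Sym2.mem_mk_left x y⟩
  obtain ⟨e, he, hxe⟩ := mem_matchedVerts.1 hx
  refine ⟨e, mem_sdiff.2 ⟨he, fun he' => ?_⟩, hxe⟩
  rcases Set.mem_symmDiff.1 hxy'.1 with ⟨h, h'⟩ | ⟨h, h'⟩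
  · exact h' (hM.eq_of_mem h he (Sym2.mem_mk_left x y) hxe ▸ he')
  · exact h' (hM'.eq_of_mem h he' (Sym2.mem_mk_left x y) hxe ▸ he)

lemma isCycles_fromEdgeSet_symmDiff (hM : IsGraphMatching G M) (hM' : IsGraphMatching G M')
    (hS : matchedVerts M = matchedVerts M') :
    (fromEdgeSet (↑M ∆ ↑M' : Set (Sym2 V))).IsCycles := by
  rintro v ⟨w, hw⟩
  obtain ⟨e, he, hve⟩ := exists_mem_sdiff_of_adj_fromEdgeSet_symmDiff hM hM' hS hw
  obtain ⟨e', he', hve'⟩ := exists_mem_sdiff_of_adj_fromEdgeSet_symmDiff hM' hM hS.symm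
    (by rwa [symmDiff_comm])
  rw [mem_sdiff] at he he'
  obtain ⟨a, rfl⟩ := Sym2.mem_iff_exists.1 hve
  obtain ⟨b, rfl⟩ := Sym2.mem_iff_exists.1 hve'
  have hab : a ≠ b := by rintro rfl; exact he.2 he'.1
  refine Set.ncard_eq_two.2 ⟨a, b, hab, Set.ext fun y => ?_⟩
  simp only [mem_neighborSet, fromEdgeSet_adj, Set.mem_symmDiff, mem_coe,
    Set.mem_insert_iff, Set.mem_singleton_iff]
  constructor
  · rintro ⟨⟨h, -⟩ | ⟨h, -⟩, -⟩
    · exact Or.inl (Sym2.congr_right.1 (hM.eq_of_mem h he.1 (Sym2.mem_mk_left v y)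
        (Sym2.mem_mk_left v a)))
    · exact Or.inr (Sym2.congr_right.1 (hM'.eq_of_mem h he'.1 (Sym2.mem_mk_left v y)
        (Sym2.mem_mk_left v b)))
  · rintro (rfl | rfl)
    · exact ⟨Or.inl he, (hM.1 he.1).ne⟩
    · exact ⟨Or.inr he', (hM'.1 he'.1).ne⟩

lemma SimpleGraph.Walk.IsCycle.even_length_of_symmDiff [Fintype V] (hM : IsGraphMatching G M)
    (hM' : IsGraphMatching G M') (hS : matchedVerts M = matchedVerts M') {u : V}
    {p : (fromEdgeSet (↑M ∆ ↑M' : Set (Sym2 V))).Walk u u} (hp : p.IsCycle) : Even p.length := by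
  classical
  have hcyc := isCycles_fromEdgeSet_symmDiff hM hM' hS
  have hsupp : ∀ x, x ∈ p.support.tail ↔ x ∈ p.support := fun x => by
    rw [p.mem_support_iff, or_iff_right_of_imp fun h => h ▸ p.end_mem_tail_support hp.not_nil]
  set N := M.filter (· ∈ p.edges)
  have hN : matchedVerts N = p.support.tail.toFinset := by
    ext x
    rw [mem_matchedVerts, List.mem_toFinset, hsupp]
    constructor
    · rintro ⟨e, he, hxe⟩
      exact p.mem_support_of_mem_edges (mem_filter.1 he).2 hxe
    · intro hx
      obtain ⟨f, hf, hxf⟩ := (p.mem_support_iff_exists_mem_edges_of_not_nil hp.not_nil).1 hx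
      obtain ⟨y, rfl⟩ := Sym2.mem_iff_exists.1 hxf
      obtain ⟨e, he, hxe⟩ :=
        exists_mem_sdiff_of_adj_fromEdgeSet_symmDiff hM hM' hS (p.adj_of_mem_edges hf)
      obtain ⟨z, rfl⟩ := Sym2.mem_iff_exists.1 hxe
      rw [mem_sdiff] at he
      have hxz : (fromEdgeSet (↑M ∆ ↑M' : Set (Sym2 V))).Adj x z :=
        (fromEdgeSet_adj _).2 ⟨Or.inl he, (hM.1 he.1).ne⟩
      have hpxz := (hp.adj_toSubgraph_iff_of_isCycles hcyc (p.mem_verts_toSubgraph.2 hx) z).2 hxz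
      exact ⟨_, mem_filter.2 ⟨he.1, p.mem_edges_toSubgraph.1 hpxz⟩, hxe⟩
  have hcard : p.length = 2 * N.card := by
    rw [← (hM.mono (filter_subset _ _)).card_matchedVerts, hN,
      List.toFinset_card_of_nodup hp.support_nodup, List.length_tail, p.length_support]
    rfl
  exact ⟨N.card, by omega⟩

lemma exists_even_isCycle_of_ne [Fintype V] (hM : IsGraphMatching G M)
    (hM' : IsGraphMatching G M') (hS : matchedVerts M = matchedVerts M') (hne : M ≠ M') :
    ∃ (v : V) (c : G.Walk v v), c.IsCycle ∧ Even c.length := by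
  set H := fromEdgeSet (↑M ∆ ↑M' : Set (Sym2 V))
  have hsub := symmDiff_subset_edgeSet hM hM'
  have hle : H ≤ G := (fromEdgeSet_le G).2 (Set.sdiff_subset.trans hsub)
  obtain ⟨e, he⟩ := symmDiff_nonempty.2 hne
  induction e using Sym2.ind with | _ u w => ?_
  replace he : s(u, w) ∈ (↑M ∆ ↑M' : Set (Sym2 V)) := by rwa [← coe_symmDiff]
  have huw : H.Adj u w := (fromEdgeSet_adj _).2 ⟨he, (hsub he).ne⟩
  obtain ⟨p, hp, -⟩ := isCycles_fromEdgeSet_symmDiff hM hM' hS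
    |>.exists_cycle_toSubgraph_verts_eq_connectedComponentSupp
      (c := H.connectedComponentMk u) rfl ⟨w, huw⟩
  exact ⟨u, p.mapLe hle, hp.mapLe hle, p.length_mapLe hle ▸ hp.even_length_of_symmDiff hM hM' hS⟩

end SymmDiff

theorem injOn_matchedVerts_iff_noEvenCycle [Fintype V] [DecidableEq V] (G : SimpleGraph V) :
    Set.InjOn matchedVerts {M | IsGraphMatching G M} ↔ NoEvenCycle G := by
  constructor
  · intro h v c hc he
    obtain ⟨M, M', hM, hM', hS, hne⟩ := exists_ne_matchedVerts_eq_of_isCycle hc he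
    exact hne (h hM hM' hS)
  · intro h M hM M' hM' hS
    by_contra hne
    obtain ⟨v, c, hc, he⟩ := exists_even_isCycle_of_ne hM hM' hS hne
    exact h v c hc he

section Polynomials

open Polynomial

variable [Fintype V] [DecidableEq V]

open Classical in
lemma pmPoly_univ_eq_sum (G : SimpleGraph V) :
    pmPoly G univ =
      ∑ S ∈ (univ.filter (IsGraphMatching G)).image matchedVerts, X ^ (S.card / 2) := by
  rw [pmPoly, ← sum_filter]
  congr 1
  ext S
  simp [isPMS_iff]

open Classical in
lemma matchPoly_eq_sum (G : SimpleGraph V) :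
    matchPoly G = ∑ M ∈ univ.filter (IsGraphMatching G), X ^ ((matchedVerts M).card / 2) := by
  rw [matchPoly, ← sum_filter]
  refine sum_congr rfl fun M hM => ?_
  rw [(mem_filter.1 hM).2.card_matchedVerts, Nat.mul_div_cancel_left _ two_pos]

theorem pmPoly_eq_matchPoly_iff (G : SimpleGraph V) :
    pmPoly G univ = matchPoly G ↔ Set.InjOn matchedVerts {M | IsGraphMatching G M} := by
  classical
  rw [pmPoly_univ_eq_sum, matchPoly_eq_sum, ← coe_filter_univ, ← card_image_iff]
  constructor
  · intro h
    simpa [eval_finsetSum] using congrArg (eval 1) h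
  · intro h
    exact sum_image (card_image_iff.1 h)

end Polynomials

/-- `p(G; z) = m(G; z)` iff `G` contains no cycle of even length. -/
theorem stmt0 [Fintype V] [DecidableEq V] (G : SimpleGraph V) :
    pmPoly G Finset.univ = matchPoly G ↔ NoEvenCycle G :=
  (pmPoly_eq_matchPoly_iff G).trans (injOn_matchedVerts_iff_noEvenCycle G)
end

section
/- If S is a subset of vertices of a graph G with no even cycles and G[S] admits a perfect matching, then this perfect matching of G[S] is unique. -/
open Polynomial

variable {V : Type*}

/-!
If two perfect matchings `M`, `M'` of `G[S]` disagree at `x`, walk from `x` alternately along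
edges of `M` and of `M'`. Each step is undone by the matching it used, so the walk can be run
backwards; and a vertex visited at times `a < b` with `b - a` odd would, reflected about the
midpoint, give two equal consecutive vertices. Hence the first vertex to recur is `x` itself,
after an even number `≥ 4` of steps, and the closed stretch is an even cycle.
-/

theorem Function.Periodic.add_two_mul {α : Type*} {P : ℕ → α} (hP : Function.Periodic P 2)
    (a d : ℕ) : P (a + 2 * d) = P a := by
  simpa [mul_comm] using hP.nat_mul d a

section ReversibleSeq

variable {f : ℕ → V} {P : ℕ → V → V}

theorem apply_zero_eq_apply_two_mul (hP : Function.Periodic P 2)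
    (hback : ∀ n, P n (f (n + 1)) = f n) {a d : ℕ} (h : f a = f (a + 2 * d)) :
    f 0 = f (2 * d) := by
  induction a with
  | zero => simpa using h
  | succ a ih =>
    apply ih
    calc f a = P a (f (a + 1)) := (hback a).symm
      _ = P (a + 2 * d) (f (a + 2 * d + 1)) := by rw [h, add_right_comm, hP.add_two_mul]
      _ = f (a + 2 * d) := hback _

theorem apply_ne_apply_add_two_mul_add_one (hne : ∀ n, f n ≠ f (n + 1))
    (hP : Function.Periodic P 2) (hfwd : ∀ n, P n (f n) = f (n + 1))
    (hback : ∀ n, P n (f (n + 1)) = f n) (a d : ℕ) :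
    f a ≠ f (a + 2 * d + 1) := by
  induction d generalizing a with
  | zero => exact hne a
  | succ d ih =>
    intro h
    apply ih (a + 1)
    calc f (a + 1) = P a (f a) := (hfwd a).symm
      _ = P (a + 2 * d + 2) (f (a + 2 * d + 2 + 1)) := by
        rw [h, show a + 2 * d + 2 = a + 2 * (d + 1) by ring, hP.add_two_mul]
      _ = f (a + 1 + 2 * d + 1) := by rw [hback]; ring_nf

end ReversibleSeq

namespace SimpleGraph

variable {G : SimpleGraph V}

theorem exists_isCycle_of_injOn {f : ℕ → V} (hadj : ∀ n, G.Adj (f n) (f (n + 1))) {j : ℕ}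
    (hj : 3 ≤ j) (hclosed : f j = f 0) (hinj : Set.InjOn f (Set.Icc 1 j)) :
    ∃ c : G.Walk (f 0) (f 0), c.IsCycle ∧ c.length = j := by
  have hchain : ((List.range (j + 1)).map f).IsChain G.Adj :=
    (List.isChain_map f).2 <| (List.isChain_range_succ _ j).2 fun m _ => hadj m
  let c : G.Walk (f 0) (f 0) :=
    (Walk.ofSupport _ (by simp) hchain).copy (by simp) (by simp [hclosed])
  have hlen : c.length = j := by simp [c]
  refine ⟨c, Walk.isCycle_iff_isPath_tail_and_le_length.2 ⟨?_, hlen ▸ hj⟩, hlen⟩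
  rw [Walk.isPath_def, Walk.support_tail_of_not_nil _ (by rw [← Walk.length_eq_zero_iff]; omega)]
  simp only [c, Walk.support_copy, Walk.support_ofSupport, List.range_succ_eq_map, List.map_cons,
    List.tail_cons, List.map_map]
  refine List.Nodup.map_on (fun a ha b hb hab => ?_) List.nodup_range
  simp only [List.mem_range] at ha hb
  simpa using hinj (by simp; omega) (by simp; omega) hab

theorem exists_isCycle_even_length {f : ℕ → V} {P : ℕ → V → V}
    (hadj : ∀ n, G.Adj (f n) (f (n + 1))) (hP : Function.Periodic P 2)
    (hfwd : ∀ n, P n (f n) = f (n + 1)) (hback : ∀ n, P n (f (n + 1)) = f n)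
    (hfin : (Set.range f).Finite) (h2 : f 2 ≠ f 0) :
    ∃ c : G.Walk (f 0) (f 0), c.IsCycle ∧ Even c.length := by
  have even_gap : ∀ {a b}, a ≤ b → f a = f b → ∃ d, b = a + 2 * d := by
    intro a b hab h
    obtain ⟨d, hd | hd⟩ := Nat.even_or_odd' (b - a)
    · exact ⟨d, by omega⟩
    · exact absurd (h.trans (by congr 1; omega))
        (apply_ne_apply_add_two_mul_add_one (fun n => (hadj n).ne) hP hfwd hback a d)
  have hreturn : ∃ j, 0 < j ∧ f j = f 0 := by
    obtain ⟨a, b, hab, hne⟩ := Function.not_injective_iff.1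
      fun hinj => Set.infinite_range_of_injective hinj hfin
    wlog hlt : a < b generalizing a b
    · exact this b a hab.symm hne.symm (by omega)
    obtain ⟨d, rfl⟩ := even_gap hlt.le hab
    exact ⟨2 * d, by omega, (apply_zero_eq_apply_two_mul hP hback hab).symm⟩
  classical
  set j := Nat.find hreturn
  obtain ⟨hj0, hjf⟩ : 0 < j ∧ f j = f 0 := Nat.find_spec hreturn
  obtain ⟨k, hk⟩ := even_gap hj0.le hjf.symm
  have hinj : Set.InjOn f (Set.Icc 1 j) := by
    intro a ha b hb hab
    wlog hle : a ≤ b generalizing a b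
    · exact (this hb ha hab.symm (by omega)).symm
    obtain ⟨d, rfl⟩ := even_gap hle hab
    by_contra hd
    exact Nat.find_min hreturn (m := 2 * d) (by simp only [Set.mem_Icc] at ha hb; omega)
      ⟨by omega, (apply_zero_eq_apply_two_mul hP hback hab).symm⟩
  have hj : 3 ≤ j := by
    rcases k with _ | _ | k
    · omega
    · exact absurd (by simpa [hk] using hjf) h2
    · omega
  obtain ⟨c, hc, hlen⟩ := exists_isCycle_of_injOn hadj hj hjf hinj
  exact ⟨c, hc, hlen ▸ ⟨k, by omega⟩⟩

end SimpleGraph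

open Classical in
noncomputable def partner (M : Finset (Sym2 V)) (x : V) : V :=
  if h : ∃ y, s(x, y) ∈ M then h.choose else x

variable {G : SimpleGraph V} {M M' : Finset (Sym2 V)} {S : Finset V} {x y : V}

theorem IsGraphMatching.partner_eq_of_mem (hM : IsGraphMatching G M) (h : s(x, y) ∈ M) :
    partner M x = y := by
  have hex : ∃ y, s(x, y) ∈ M := ⟨y, h⟩
  rw [partner, dif_pos hex]
  by_contra hne
  exact hM.2 _ hex.choose_spec _ h (fun he => hne (Sym2.congr_right.1 he)) x
    (Sym2.mem_mk_left _ _) (Sym2.mem_mk_left _ _)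

theorem Covers.mk_partner_mem (hM : Covers M S) (hx : x ∈ S) : s(x, partner M x) ∈ M := by
  obtain ⟨e, he, hxe⟩ := (hM x).1 hx
  obtain ⟨y, rfl⟩ := Sym2.mem_iff_exists.1 hxe
  have hex : ∃ y, s(x, y) ∈ M := ⟨y, he⟩
  rw [partner, dif_pos hex]
  exact hex.choose_spec

namespace IsPerfectMatchingOn

theorem mem_iff_partner_eq (hM : IsPerfectMatchingOn G M S) :
    s(x, y) ∈ M ↔ x ∈ S ∧ partner M x = y := by
  refine ⟨fun h => ⟨(hM.2 x).2 ⟨_, h, Sym2.mem_mk_left x y⟩, hM.1.partner_eq_of_mem h⟩, ?_⟩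
  rintro ⟨hx, rfl⟩
  exact hM.2.mk_partner_mem hx

theorem adj_partner (hM : IsPerfectMatchingOn G M S) (hx : x ∈ S) : G.Adj x (partner M x) :=
  hM.1.1 (hM.2.mk_partner_mem hx)

theorem partner_mem (hM : IsPerfectMatchingOn G M S) (hx : x ∈ S) : partner M x ∈ S :=
  (hM.2 _).2 ⟨_, hM.2.mk_partner_mem hx, Sym2.mem_mk_right _ _⟩

theorem partner_partner (hM : IsPerfectMatchingOn G M S) (hx : x ∈ S) :
    partner M (partner M x) = x :=
  hM.1.partner_eq_of_mem (Sym2.eq_swap ▸ hM.2.mk_partner_mem hx)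

theorem eq_of_forall_partner_eq (hM : IsPerfectMatchingOn G M S)
    (hM' : IsPerfectMatchingOn G M' S) (h : ∀ x ∈ S, partner M x = partner M' x) : M = M' := by
  ext e
  induction e using Sym2.ind with
  | h x y =>
    rw [hM.mem_iff_partner_eq, hM'.mem_iff_partner_eq]
    exact and_congr_right fun hx => by rw [h x hx]

end IsPerfectMatchingOn

noncomputable def alternatingSeq (M M' : Finset (Sym2 V)) (x : V) : ℕ → V
  | 0 => x
  | n + 1 => partner (if Even n then M else M') (alternatingSeq M M' x n)

theorem exists_isCycle_even_length_of_partner_ne (hM : IsPerfectMatchingOn G M S)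
    (hM' : IsPerfectMatchingOn G M' S) (hx : x ∈ S) (hne : partner M x ≠ partner M' x) :
    ∃ c : G.Walk x x, c.IsCycle ∧ Even c.length := by
  have hstep : ∀ n : ℕ, IsPerfectMatchingOn G (if Even n then M else M') S := fun n => by
    split_ifs <;> assumption
  set f := alternatingSeq M M' x
  have hmem : ∀ n, f n ∈ S := fun n => by
    induction n with
    | zero => exact hx
    | succ n ih => exact (hstep n).partner_mem ih
  have h2 : f 2 ≠ f 0 := fun h => hne <| Eq.symm <| hM'.1.partner_eq_of_mem <|
    Sym2.eq_swap ▸ hM'.mem_iff_partner_eq.2 ⟨hM.partner_mem hx, h⟩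
  exact G.exists_isCycle_even_length (P := fun (n : ℕ) => partner (if Even n then M else M'))
    (fun n => (hstep n).adj_partner (hmem n)) (fun n => by simp [Nat.even_add_one])
    (fun _ => rfl) (fun n => (hstep n).partner_partner (hmem n))
    (S.finite_toSet.subset (Set.range_subset_iff.2 hmem)) h2

/-- in a graph with no even cycles, a perfect matching of an induced
subgraph `G[S]` is unique when it exists. -/
theorem stmt1 (G : SimpleGraph V) (hG : NoEvenCycle G) (S : Finset V)
    (M M' : Finset (Sym2 V))
    (hM : IsPerfectMatchingOn G M S) (hM' : IsPerfectMatchingOn G M' S) :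
    M = M' :=
  hM.eq_of_forall_partner_eq hM' fun x hx => by
    by_contra hne
    obtain ⟨c, hc, heven⟩ := exists_isCycle_even_length_of_partner_ne hM hM' hx hne
    exact hG x c hc heven
end

section
/- Let G be a graph with an edge e = vw contained in no even cycle of G. Then p(G; z) = p(G \ e; z) + z · p(G − {v,w}; z), where G \ e is G with the edge e deleted and G − {v,w} is G with the vertices v and w deleted. -/
open Polynomial

variable {V : Type*}

/-!
A set `S` that is perfectly matchable in `G` either has a perfect matching avoiding `e = vw`, or
contains `v` and `w` with `S \ {v, w}` perfectly matchable in `G` (drop `e` from a matching that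
uses it); conversely each alternative makes `S` perfectly matchable. The alternatives exclude each
other: if `M` avoids `e` and `M'` contains it, the symmetric difference of `M` and `M'` has all
degrees `0` or `2` and alternates between `M` and `M'`, so the cycle of it through `e` is an even
cycle of `G` containing `e`. Summing over `S`, the second alternative contributes
`z · p(G − {v, w}; z)`.
-/

open SimpleGraph Finset
open scoped symmDiff

theorem SimpleGraph.Walk.IsCycle.even_length_of_isAlternating {H G' : SimpleGraph V}
    (halt : H.IsAlternating G') {u : V} {c : H.Walk u u} (hc : c.IsCycle) :
    Even c.length := by
  -- `Q i`: the `i`-th edge of `c` lies in `G'`. It alternates along `c`, also across the base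
  -- vertex, which forces an even length.
  set Q : ℕ → Prop := fun i ↦ G'.Adj (c.getVert i) (c.getVert (i + 1)) with hQ
  have hlen := hc.three_le_length
  have step : ∀ i, i + 1 < c.length → (Q (i + 1) ↔ ¬ Q i) := by
    intro i hi
    have hne := hc.getVert_sub_one_ne_getVert_add_one (i := i + 1) hi.le
    simp only [add_tsub_cancel_right] at hne
    simpa [hQ, G'.adj_comm (c.getVert i)] using
      halt hne.symm (c.adj_getVert_succ hi) (c.adj_getVert_succ (i := i) (by omega)).symm
  have parity : ∀ i, i < c.length → (Q i ↔ (Q 0 ↔ Even i)) := by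
    intro i
    induction i with
    | zero => simp
    | succ i ih =>
      intro hi
      rw [step i hi, ih (by omega), Nat.even_add_one]
      tauto
  have wrap : Q 0 ↔ ¬ Q (c.length - 1) := by
    have h1 := c.adj_getVert_succ (i := 0) (by omega)
    have h2 := c.adj_getVert_succ (i := c.length - 1) (by omega)
    rw [Nat.sub_add_cancel (by omega), c.getVert_length] at h2
    have := halt hc.snd_ne_penultimate (by simpa using h1) h2.symm
    simpa [hQ, Nat.sub_add_cancel (show 1 ≤ c.length by omega), G'.adj_comm u] using this
  have := parity (c.length - 1) (by omega)
  have hodd : ¬ Even (c.length - 1) := by tauto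
  simpa [Nat.even_sub (show 1 ≤ c.length by omega)] using hodd

namespace SimpleGraph.Subgraph

variable {G : SimpleGraph V} {M M' : G.Subgraph} {v w : V}

theorem mem_verts_of_adj_symmDiff (hverts : M.verts = M'.verts)
    (h : (M.spanningCoe ∆ M'.spanningCoe).Adj v w) : v ∈ M.verts := by
  simp only [symmDiff_def, SimpleGraph.sup_adj, SimpleGraph.sdiff_adj, spanningCoe_adj] at h
  rcases h with h | h
  · exact M.edge_vert h.1
  · exact hverts ▸ M'.edge_vert h.1

theorem IsMatching.symmDiff_isCycles (hM : M.IsMatching) (hM' : M'.IsMatching)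
    (hverts : M.verts = M'.verts) : (M.spanningCoe ∆ M'.spanningCoe).IsCycles := by
  intro v hv
  obtain ⟨w, hw, hwu⟩ := hM (mem_verts_of_adj_symmDiff hverts hv.some_mem)
  obtain ⟨w', hw', hwu'⟩ := hM' (hverts ▸ mem_verts_of_adj_symmDiff hverts hv.some_mem)
  by_cases hww' : w = w'
  · obtain ⟨x, hx⟩ := hv
    simp only [SimpleGraph.mem_neighborSet, symmDiff_def, SimpleGraph.sup_adj,
      SimpleGraph.sdiff_adj, spanningCoe_adj] at hx
    grind
  · have hnbr : (M.spanningCoe ∆ M'.spanningCoe).neighborSet v = {w, w'} := by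
      ext x
      simp only [SimpleGraph.mem_neighborSet, symmDiff_def, SimpleGraph.sup_adj,
        SimpleGraph.sdiff_adj, spanningCoe_adj, Set.mem_insert_iff, Set.mem_singleton_iff]
      grind
    rw [hnbr, Set.ncard_pair hww']

theorem IsMatching.isAlternating_symmDiff_left (hM : M.IsMatching) (hM' : M'.IsMatching)
    (hverts : M.verts = M'.verts) :
    (M.spanningCoe ∆ M'.spanningCoe).IsAlternating M.spanningCoe := by
  intro v w w' hww' hvw hvw'
  obtain ⟨x, hx, hxu⟩ := hM (mem_verts_of_adj_symmDiff hverts hvw)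
  obtain ⟨x', hx', hxu'⟩ := hM' (hverts ▸ mem_verts_of_adj_symmDiff hverts hvw)
  simp only [symmDiff_def, SimpleGraph.sup_adj, SimpleGraph.sdiff_adj, spanningCoe_adj] at *
  grind

theorem IsMatching.exists_isCycle_even_length_of_adj [Finite V] (hM : M.IsMatching)
    (hM' : M'.IsMatching) (hverts : M.verts = M'.verts) (h' : M'.Adj v w) (h : ¬ M.Adj v w) :
    ∃ (u : V) (c : G.Walk u u), c.IsCycle ∧ Even c.length ∧ s(v, w) ∈ c.edges := by
  set H := M.spanningCoe ∆ M'.spanningCoe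
  have hadj : H.Adj v w := by simp [H, symmDiff_def, h, h']
  obtain ⟨u, c, hc, hvw⟩ := adj_and_reachable_delete_edges_iff_exists_cycle.mp
    ⟨hadj, (hM.symmDiff_isCycles hM' hverts).reachable_deleteEdges hadj⟩
  have hle : H ≤ G := symmDiff_le_sup.trans (sup_le M.spanningCoe_le M'.spanningCoe_le)
  refine ⟨u, c.mapLe hle, (Walk.isCycle_mapLe hle).2 hc, ?_, by rwa [Walk.edges_mapLe_eq_edges]⟩
  rw [Walk.length_mapLe]
  exact hc.even_length_of_isAlternating (hM.isAlternating_symmDiff_left hM' hverts)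

end SimpleGraph.Subgraph

variable {G G' : SimpleGraph V} {M : Finset (Sym2 V)} {S : Finset V} {v w : V}

namespace IsPerfectMatchingOn

def toSubgraph (h : IsPerfectMatchingOn G M S) : G.Subgraph where
  verts := S
  Adj x y := s(x, y) ∈ M
  adj_sub hxy := h.1.1 hxy
  edge_vert hxy := (h.2 _).2 ⟨_, hxy, Sym2.mem_mk_left _ _⟩
  symm := ⟨fun _ _ hxy ↦ by rwa [Sym2.eq_swap]⟩

theorem isMatching_toSubgraph (h : IsPerfectMatchingOn G M S) : h.toSubgraph.IsMatching := by
  intro x hx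
  obtain ⟨e, he, hxe⟩ := (h.2 x).1 hx
  obtain ⟨y, rfl⟩ := Sym2.mem_iff_exists.1 hxe
  refine ⟨y, he, fun y' hy' ↦ ?_⟩
  by_contra hne
  exact h.1.2 _ hy' _ he (mt Sym2.congr_right.1 hne) x (Sym2.mem_mk_left _ _)
    (Sym2.mem_mk_left _ _)

theorem mono (h : IsPerfectMatchingOn G M S) (hle : G ≤ G') : IsPerfectMatchingOn G' M S :=
  ⟨⟨h.1.1.trans (edgeSet_mono hle), h.1.2⟩, h.2⟩

theorem deleteEdges (h : IsPerfectMatchingOn G M S) {e : Sym2 V} (he : e ∉ M) :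
    IsPerfectMatchingOn (G.deleteEdges {e}) M S := by
  refine ⟨⟨fun f hf ↦ ?_, h.1.2⟩, h.2⟩
  rw [edgeSet_deleteEdges]
  exact ⟨h.1.1 hf, by rintro rfl; exact he hf⟩

variable [DecidableEq V]

theorem erase (h : IsPerfectMatchingOn G M S) (hvw : s(v, w) ∈ M) :
    IsPerfectMatchingOn G (M.erase s(v, w)) ((S.erase v).erase w) := by
  refine ⟨⟨fun f hf ↦ h.1.1 (mem_of_mem_erase hf), fun e he f hf ↦
    h.1.2 e (mem_of_mem_erase he) f (mem_of_mem_erase hf)⟩, fun x ↦ ?_⟩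
  have hdisj : ∀ f ∈ M, f ≠ s(v, w) → x ∈ f → x ≠ v ∧ x ≠ w := fun f hf hne hxf ↦ by
    constructor <;> rintro rfl
    exacts [h.1.2 _ hvw f hf hne.symm _ (Sym2.mem_mk_left _ _) hxf,
      h.1.2 _ hvw f hf hne.symm _ (Sym2.mem_mk_right _ _) hxf]
  simp only [mem_erase, h.2 x]
  constructor
  · rintro ⟨hxw, hxv, f, hf, hxf⟩
    exact ⟨f, ⟨by rintro rfl; simp_all, hf⟩, hxf⟩
  · rintro ⟨f, ⟨hne, hf⟩, hxf⟩
    exact ⟨(hdisj f hf hne hxf).2, (hdisj f hf hne hxf).1, f, hf, hxf⟩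

theorem insert_of_erase (h : IsPerfectMatchingOn G M ((S.erase v).erase w)) (hvw : G.Adj v w)
    (hv : v ∈ S) (hw : w ∈ S) : IsPerfectMatchingOn G (insert s(v, w) M) S := by
  have hfree : ∀ f ∈ M, ∀ x ∈ f, x ≠ v ∧ x ≠ w := fun f hf x hxf ↦ by
    have := (h.2 x).2 ⟨f, hf, hxf⟩
    simp only [mem_erase] at this
    exact ⟨this.2.1, this.1⟩
  refine ⟨⟨?_, ?_⟩, fun x ↦ ?_⟩
  · rw [coe_insert, Set.insert_subset_iff]
    exact ⟨hvw, h.1.1⟩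
  · simp only [mem_insert]
    rintro e (rfl | he) f (rfl | hf) hne x hxe hxf
    · exact hne rfl
    · rcases Sym2.mem_iff.1 hxe with rfl | rfl
      exacts [(hfree f hf x hxf).1 rfl, (hfree f hf x hxf).2 rfl]
    · rcases Sym2.mem_iff.1 hxf with rfl | rfl
      exacts [(hfree e he x hxe).1 rfl, (hfree e he x hxe).2 rfl]
    · exact h.1.2 e he f hf hne x hxe hxf
  · have := h.2 x
    simp only [mem_erase] at this
    simp only [exists_mem_insert, Sym2.mem_iff, ← this]
    by_cases hxv : x = v
    · simp [hxv, hv]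
    · by_cases hxw : x = w <;> simp [hxv, hxw, hw]

end IsPerfectMatchingOn

theorem IsPMS.mono (h : IsPMS G S) (hle : G ≤ G') : IsPMS G' S :=
  h.imp fun _ hM ↦ hM.mono hle

theorem isPMS_iff_isPMS_deleteEdges_or [DecidableEq V] (hvw : G.Adj v w) :
    IsPMS G S ↔ IsPMS (G.deleteEdges {s(v, w)}) S ∨
      v ∈ S ∧ w ∈ S ∧ IsPMS G ((S.erase v).erase w) := by
  constructor
  · rintro ⟨M, hM⟩
    by_cases hvwM : s(v, w) ∈ M
    · exact Or.inr ⟨(hM.2 v).2 ⟨_, hvwM, Sym2.mem_mk_left _ _⟩,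
        (hM.2 w).2 ⟨_, hvwM, Sym2.mem_mk_right _ _⟩, _, hM.erase hvwM⟩
    · exact Or.inl ⟨M, hM.deleteEdges hvwM⟩
  · rintro (h | ⟨hv, hw, M, hM⟩)
    · exact h.mono (deleteEdges_le _)
    · exact ⟨_, hM.insert_of_erase hvw hv hw⟩

theorem not_isPMS_deleteEdges_and_isPMS_erase [Finite V] [DecidableEq V] (hvw : G.Adj v w)
    (he : ∀ (a : V) (c : G.Walk a a), c.IsCycle → Even c.length → s(v, w) ∉ c.edges) :
    ¬ (IsPMS (G.deleteEdges {s(v, w)}) S ∧ v ∈ S ∧ w ∈ S ∧ IsPMS G ((S.erase v).erase w)) := by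
  rintro ⟨⟨M, hM⟩, hv, hw, M', hM'⟩
  have hvwM : s(v, w) ∉ M := fun h ↦ (edgeSet_deleteEdges _ ▸ hM.1.1 h).2 rfl
  obtain ⟨a, c, hc, heven, hvwc⟩ :=
    (hM.mono (deleteEdges_le _)).isMatching_toSubgraph.exists_isCycle_even_length_of_adj
      (hM'.insert_of_erase hvw hv hw).isMatching_toSubgraph rfl (mem_insert_self _ _) hvwM
  exact he a c hc heven hvwc

theorem Finset.sum_powerset_insert_insert_ite_mem_and_mem {β : Type*} [AddCommMonoid β]
    [DecidableEq V] {A : Finset V} (hvw : v ≠ w) (hv : v ∉ A) (hw : w ∉ A) (f : Finset V → β) :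
    ∑ S ∈ (insert v (insert w A)).powerset, (if v ∈ S ∧ w ∈ S then f S else 0) =
      ∑ T ∈ A.powerset, f (insert v (insert w T)) := by
  have hv' : v ∉ insert w A := by simp [hvw, hv]
  have hA : ∀ T ∈ A.powerset, v ∉ T ∧ w ∉ T := fun T hT ↦
    ⟨fun h ↦ hv (mem_powerset.1 hT h), fun h ↦ hw (mem_powerset.1 hT h)⟩
  rw [sum_powerset_insert hv', sum_powerset_insert hw, sum_powerset_insert hw,
    sum_ite_of_false fun T hT h ↦ (hA T hT).1 h.1,
    sum_ite_of_false fun T hT h ↦ by simp [hvw, (hA T hT).1] at h,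
    sum_ite_of_false fun T hT h ↦ by simp [hvw.symm, (hA T hT).2] at h,
    sum_ite_of_true fun T _ ↦ by simp]
  simp

open Classical in
theorem X_mul_pmPoly [Fintype V] [DecidableEq V] {A : Finset V} (hvw : v ≠ w) (hv : v ∉ A)
    (hw : w ∉ A) : X * pmPoly G A = ∑ S ∈ (insert v (insert w A)).powerset,
      if v ∈ S ∧ w ∈ S then
        (if IsPMS G ((S.erase v).erase w) then (X : ℤ[X]) ^ (S.card / 2) else 0) else 0 := by
  rw [Finset.sum_powerset_insert_insert_ite_mem_and_mem hvw hv hw, pmPoly, mul_sum]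
  refine sum_congr rfl fun T hT ↦ ?_
  have hvT : v ∉ insert w T := by simpa [hvw] using fun h ↦ hv (mem_powerset.1 hT h)
  have hwT : w ∉ T := fun h ↦ hw (mem_powerset.1 hT h)
  rw [erase_insert hvT, erase_insert hwT, card_insert_of_notMem hvT, card_insert_of_notMem hwT]
  split_ifs
  · rw [← pow_succ', add_assoc, one_add_one_eq_two, Nat.add_div_right _ two_pos]
  · rw [mul_zero]

/-- if the edge `e = vw` lies on no even cycle, then
`p(G; z) = p(G \ e; z) + z·p(G − {v,w}; z)`. -/
theorem stmt4 [Fintype V] [DecidableEq V] (G : SimpleGraph V) (v w : V) (hvw : G.Adj v w)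
    (he : ∀ (a : V) (c : G.Walk a a), c.IsCycle → Even c.length → s(v, w) ∉ c.edges) :
    pmPoly G Finset.univ =
      pmPoly (G.deleteEdges {s(v, w)}) Finset.univ +
        X * pmPoly G ((Finset.univ.erase v).erase w) := by
  have huniv : (univ : Finset V) = insert v (insert w ((univ.erase v).erase w)) := by
    rw [insert_erase (mem_erase.2 ⟨hvw.ne.symm, mem_univ w⟩), insert_erase (mem_univ v)]
  rw [X_mul_pmPoly hvw.ne (by simp) (by simp), ← huniv, pmPoly, pmPoly, ← sum_add_distrib]
  refine sum_congr rfl fun S _ ↦ ?_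
  have hiff := isPMS_iff_isPMS_deleteEdges_or (S := S) hvw
  have hdisj := not_isPMS_deleteEdges_and_isPMS_erase (S := S) hvw he
  split_ifs <;> (try simp only [add_zero, zero_add]) <;> tauto
end

section
/- Let G be a graph and v a vertex contained in no even cycle, with neighbors w_1, …, w_r. Then p(G; z) = p(G − v; z) + z · Σ_{i=1}^r p(G − {v, w_i}; z). -/
/-!
Split the perfectly matchable sets `S` according to whether they contain `v`. If `v ∈ S` and
`w` is the partner of `v` in a perfect matching of `G[S]`, then `S \ {v, w}` is perfectly
matchable; conversely every perfectly matchable `T` avoiding `v` and a neighbour `w` of `v`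
extends to `T ∪ {v, w}`. Hence the sets containing `v` are counted by `z ∑_w p(G − {v, w})` once
we know that `w` is determined by `S`: if two perfect matchings of `G[S]` match `v` differently,
their symmetric difference is a union of alternating, hence even, cycles, one of which passes
through `v`.
-/

open Polynomial

variable {V : Type*}

namespace SimpleGraph

lemma IsAlternating.even_length_of_isCycle {H G' : SimpleGraph V} (halt : H.IsAlternating G')
    {u : V} {c : H.Walk u u} (hc : c.IsCycle) : Even c.length := by
  set n := c.length
  have hn3 : 3 ≤ n := hc.three_le_length
  set b : ℕ → Prop := fun i => G'.Adj (c.getVert i) (c.getVert (i + 1)) with hb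
  -- the two cycle edges at a vertex end at distinct vertices, so membership in `G'` alternates
  have step : ∀ i, i + 1 < n → (b (i + 1) ↔ ¬ b i) := by
    intro i hi
    have hne := hc.getVert_sub_one_ne_getVert_add_one (i := i + 1) (by omega)
    simp only [Nat.add_sub_cancel] at hne
    have := halt hne.symm (c.adj_getVert_succ (by omega)) (c.adj_getVert_succ (by omega)).symm
    simp only [hb]
    tauto
  have wrap : b 0 ↔ ¬ b (n - 1) := by
    have hlast : c.getVert (n - 1 + 1) = u := by
      rw [Nat.sub_add_cancel (by omega)]; exact c.getVert_length
    have hne := hc.snd_ne_penultimate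
    have h1 : H.Adj u (c.getVert 1) := by simpa using c.adj_getVert_succ (i := 0) (by omega)
    have h2 : H.Adj u (c.getVert (n - 1)) := by
      have := c.adj_getVert_succ (i := n - 1) (by omega)
      rw [hlast] at this; exact this.symm
    have := halt hne h1 h2
    simp only [hb, hlast, c.getVert_zero, zero_add]
    rwa [G'.adj_comm _ u]
  have parity : ∀ i, i < n → (b i ↔ (b 0 ↔ Even i)) := by
    intro i
    induction i with
    | zero => simp
    | succ i ih =>
      intro hi
      rw [step i hi, ih (by omega), Nat.even_add_one]
      tauto
  have := parity (n - 1) (by omega)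
  rw [← Nat.sub_add_cancel (show 1 ≤ n by omega), Nat.even_add_one]
  tauto

end SimpleGraph

open SimpleGraph
open scoped symmDiff

section Matching
variable {G : SimpleGraph V} {M M₁ M₂ : Finset (Sym2 V)} {S T : Finset V} {v w w₁ w₂ x y y' : V}

lemma IsGraphMatching.eq_of_mem_s5 (hM : IsGraphMatching G M) (hy : s(x, y) ∈ M)
    (hy' : s(x, y') ∈ M) : y = y' := by
  by_contra hne
  exact hM.2 _ hy _ hy' (fun h => hne (Sym2.congr_right.1 h)) x (Sym2.mem_mk_left x y)
    (Sym2.mem_mk_left x y')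

lemma IsPerfectMatchingOn.adj (h : IsPerfectMatchingOn G M S) (he : s(x, y) ∈ M) : G.Adj x y :=
  h.1.1 he

lemma IsPerfectMatchingOn.mem_right (h : IsPerfectMatchingOn G M S) (he : s(x, y) ∈ M) : y ∈ S :=
  (h.2 y).2 ⟨_, he, Sym2.mem_mk_right x y⟩

lemma IsPerfectMatchingOn.mem_left (h : IsPerfectMatchingOn G M S) (he : s(x, y) ∈ M) : x ∈ S :=
  (h.2 x).2 ⟨_, he, Sym2.mem_mk_left x y⟩

lemma IsPerfectMatchingOn.exists_mem (h : IsPerfectMatchingOn G M S) (hx : x ∈ S) :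
    ∃ y, s(x, y) ∈ M := by
  obtain ⟨e, he, hxe⟩ := (h.2 x).1 hx
  obtain ⟨y, rfl⟩ := Sym2.mem_iff_exists.1 hxe
  exact ⟨y, he⟩

/-- The edges of `M` inside `S`, as a spanning subgraph of the complete graph on `S`: a perfect
matching of `G[S]` becomes a perfect matching in the sense of `SimpleGraph.Subgraph`. -/
def edgeSubgraph (M : Finset (Sym2 V)) (S : Finset V) : (⊤ : SimpleGraph S).Subgraph :=
  SimpleGraph.toSubgraph (fromEdgeSet (Sym2.map Subtype.val ⁻¹' M)) le_top

@[simp]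
lemma edgeSubgraph_adj {a b : S} : (edgeSubgraph M S).Adj a b ↔ s(a.1, b.1) ∈ M ∧ a ≠ b := by
  simp [edgeSubgraph]

lemma IsPerfectMatchingOn.isPerfectMatching_edgeSubgraph (h : IsPerfectMatchingOn G M S) :
    (edgeSubgraph M S).IsPerfectMatching := by
  rw [Subgraph.isPerfectMatching_iff]
  rintro ⟨x, hx⟩
  obtain ⟨y, hy⟩ := h.exists_mem hx
  refine ⟨⟨y, h.mem_right hy⟩, ?_, ?_⟩
  · simpa [hy] using (h.adj hy).ne
  · intro z hz
    exact Subtype.ext (h.1.eq_of_mem_s5 (edgeSubgraph_adj.1 hz).1 hy)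

theorem IsPerfectMatchingOn.exists_even_cycle (h₁ : IsPerfectMatchingOn G M₁ S)
    (h₂ : IsPerfectMatchingOn G M₂ S) (e₁ : s(v, w₁) ∈ M₁) (e₂ : s(v, w₂) ∈ M₂) (hw : w₁ ≠ w₂) :
    ∃ c : G.Walk v v, c.IsCycle ∧ Even c.length := by
  have hP₁ := h₁.isPerfectMatching_edgeSubgraph
  have hP₂ := h₂.isPerfectMatching_edgeSubgraph
  set H := (edgeSubgraph M₁ S).spanningCoe ∆ (edgeSubgraph M₂ S).spanningCoe
  have hadj : H.Adj ⟨v, h₁.mem_left e₁⟩ ⟨w₁, h₁.mem_right e₁⟩ := by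
    have : s(v, w₁) ∉ M₂ := fun e => hw (h₂.1.eq_of_mem_s5 e e₂)
    simpa [H, symmDiff_def, e₁, this] using (h₁.adj e₁).ne
  obtain ⟨c, hc, -⟩ :=
    (hP₁.symmDiff_isCycles hP₂).exists_cycle_toSubgraph_verts_eq_connectedComponentSupp
      (c := H.connectedComponentMk _) rfl ⟨_, hadj⟩
  let f : H →g G := ⟨Subtype.val, fun {a b} hab => by
    simp only [H, symmDiff_def, sup_adj, sdiff_adj, Subgraph.spanningCoe_adj,
      edgeSubgraph_adj] at hab
    rcases hab with ⟨⟨he, -⟩, -⟩ | ⟨⟨he, -⟩, -⟩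
    exacts [h₁.adj he, h₂.adj he]⟩
  refine ⟨c.map f, hc.map Subtype.val_injective, ?_⟩
  rw [Walk.length_map]
  exact (hP₁.isAlternating_symmDiff_left hP₂).even_length_of_isCycle hc

lemma IsPerfectMatchingOn.insert_edge [DecidableEq V] (h : IsPerfectMatchingOn G M T)
    (hadj : G.Adj v w) (hv : v ∉ T) (hw : w ∉ T) :
    IsPerfectMatchingOn G (insert s(v, w) M) (insert v (insert w T)) := by
  have hT : ∀ e ∈ M, ∀ x ∈ e, x ∈ T := fun e he x hx => (h.2 x).2 ⟨e, he, hx⟩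
  refine ⟨⟨?_, ?_⟩, fun x => ?_⟩
  · rw [Finset.coe_insert, Set.insert_subset_iff]
    exact ⟨hadj, h.1.1⟩
  · simp only [Finset.mem_insert]
    rintro e (rfl | he) f (rfl | hf) hef x hxe hxf
    · exact hef rfl
    · have := hT f hf x hxf
      rcases Sym2.mem_iff.1 hxe with rfl | rfl <;> contradiction
    · have := hT e he x hxe
      rcases Sym2.mem_iff.1 hxf with rfl | rfl <;> contradiction
    · exact h.1.2 e he f hf hef x hxe hxf
  · simp [h.2 x, or_assoc]

lemma IsPerfectMatchingOn.erase_edge [DecidableEq V] (h : IsPerfectMatchingOn G M S)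
    (he : s(v, w) ∈ M) : IsPerfectMatchingOn G (M.erase s(v, w)) ((S.erase v).erase w) := by
  refine ⟨⟨subset_trans (by simp) h.1.1, fun e he' f hf =>
    h.1.2 e (Finset.mem_of_mem_erase he') f (Finset.mem_of_mem_erase hf)⟩, fun x => ?_⟩
  simp only [Finset.mem_erase, h.2 x]
  constructor
  · rintro ⟨hxw, hxv, e, heM, hxe⟩
    refine ⟨e, ⟨?_, heM⟩, hxe⟩
    rintro rfl
    rcases Sym2.mem_iff.1 hxe with rfl | rfl
    exacts [hxv rfl, hxw rfl]
  · rintro ⟨e, ⟨hne, heM⟩, hxe⟩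
    refine ⟨?_, ?_, e, heM, hxe⟩
    · rintro rfl
      exact h.1.2 e heM _ he hne x hxe (Sym2.mem_mk_right v x)
    · rintro rfl
      exact h.1.2 e heM _ he hne x hxe (Sym2.mem_mk_left x w)

lemma exists_perfectMatchingOn_insert [DecidableEq V] (hv : v ∉ T) (hw : w ∈ T)
    (hadj : G.Adj v w) (hp : IsPMS G (T.erase w)) :
    ∃ M, IsPerfectMatchingOn G M (insert v T) ∧ s(v, w) ∈ M := by
  obtain ⟨M, hM⟩ := hp
  have := hM.insert_edge hadj (fun h => hv (Finset.mem_of_mem_erase h)) (Finset.notMem_erase w T)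
  rw [Finset.insert_erase hw] at this
  exact ⟨_, this, Finset.mem_insert_self _ _⟩

lemma isPMS_insert_iff [DecidableEq V] (hv : v ∉ T) :
    IsPMS G (insert v T) ↔ ∃ w ∈ T, G.Adj v w ∧ IsPMS G (T.erase w) := by
  constructor
  · rintro ⟨M, hM⟩
    obtain ⟨w, hw⟩ := hM.exists_mem (Finset.mem_insert_self v T)
    have hadj := hM.adj hw
    have hwT : w ∈ T := (Finset.mem_insert.1 (hM.mem_right hw)).resolve_left hadj.ne'
    refine ⟨w, hwT, hadj, M.erase s(v, w), ?_⟩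
    simpa [Finset.erase_insert hv] using hM.erase_edge hw
  · rintro ⟨w, hwT, hadj, hp⟩
    obtain ⟨M, hM, -⟩ := exists_perfectMatchingOn_insert hv hwT hadj hp
    exact ⟨M, hM⟩

lemma eq_of_isPMS_erase [DecidableEq V] (hcyc : ∀ c : G.Walk v v, c.IsCycle → ¬Even c.length)
    (hv : v ∉ T) (hw₁ : w₁ ∈ T) (hw₂ : w₂ ∈ T) (hadj₁ : G.Adj v w₁) (hadj₂ : G.Adj v w₂)
    (hp₁ : IsPMS G (T.erase w₁)) (hp₂ : IsPMS G (T.erase w₂)) : w₁ = w₂ := by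
  by_contra hne
  obtain ⟨M₁, hM₁, e₁⟩ := exists_perfectMatchingOn_insert hv hw₁ hadj₁ hp₁
  obtain ⟨M₂, hM₂, e₂⟩ := exists_perfectMatchingOn_insert hv hw₂ hadj₂ hp₂
  obtain ⟨c, hc, heven⟩ := hM₁.exists_even_cycle hM₂ e₁ e₂ hne
  exact hcyc c hc heven

end Matching

theorem Finset.sum_powerset_ite_mem {α β : Type*} [DecidableEq α] [AddCommMonoid β]
    {A : Finset α} {a : α} (ha : a ∈ A) (f : Finset α → β) :
    ∑ T ∈ A.powerset, (if a ∈ T then f (T.erase a) else 0) = ∑ T ∈ (A.erase a).powerset, f T := by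
  conv_lhs => rw [← Finset.insert_erase ha]
  rw [Finset.sum_powerset_insert (Finset.notMem_erase a A)]
  have hnot : ∀ T ∈ (A.erase a).powerset, a ∉ T := fun T hT h =>
    Finset.notMem_erase a A (Finset.mem_powerset.1 hT h)
  rw [Finset.sum_eq_zero fun T hT => if_neg (hnot T hT), zero_add]
  exact Finset.sum_congr rfl fun T hT => by
    rw [if_pos (Finset.mem_insert_self a T), Finset.erase_insert (hnot T hT)]

open Classical in
noncomputable def pmTerm (G : SimpleGraph V) (S : Finset V) : ℤ[X] :=
  if IsPMS G S then X ^ (S.card / 2) else 0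

lemma pmPoly_eq_sum_pmTerm [Fintype V] (G : SimpleGraph V) (A : Finset V) :
    pmPoly G A = ∑ S ∈ A.powerset, pmTerm G S := rfl

lemma pmPoly_insert [Fintype V] [DecidableEq V] (G : SimpleGraph V) {A : Finset V} {a : V}
    (ha : a ∉ A) :
    pmPoly G (insert a A) = pmPoly G A + ∑ T ∈ A.powerset, pmTerm G (insert a T) :=
  Finset.sum_powerset_insert ha _

lemma pmTerm_insert [DecidableEq V] {G : SimpleGraph V} {v : V} [Fintype (G.neighborSet v)]
    (hcyc : ∀ c : G.Walk v v, c.IsCycle → ¬Even c.length) {T : Finset V} (hv : v ∉ T) :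
    pmTerm G (insert v T) =
      ∑ w ∈ G.neighborFinset v, if w ∈ T then X * pmTerm G (T.erase w) else 0 := by
  by_cases h : IsPMS G (insert v T)
  · obtain ⟨w, hwT, hadj, hp⟩ := (isPMS_insert_iff hv).1 h
    rw [Finset.sum_eq_single_of_mem w ((mem_neighborFinset G v w).2 hadj)]
    · have hcard : (insert v T).card / 2 = (T.erase w).card / 2 + 1 := by
        rw [Finset.card_insert_of_notMem hv, Finset.card_erase_of_mem hwT]
        have := Finset.card_pos.2 ⟨w, hwT⟩
        omega
      rw [if_pos hwT, pmTerm, pmTerm, if_pos h, if_pos hp, hcard, pow_succ']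
    · intro u hu hne
      have hadj' := (mem_neighborFinset G v u).1 hu
      split_ifs with huT
      · rw [pmTerm, if_neg fun hp' => hne (eq_of_isPMS_erase hcyc hv huT hwT hadj' hadj hp' hp),
          mul_zero]
      · rfl
  · rw [pmTerm, if_neg h, eq_comm]
    refine Finset.sum_eq_zero fun u hu => ?_
    split_ifs with huT
    · rw [pmTerm, if_neg fun hp => h ((isPMS_insert_iff hv).2
        ⟨u, huT, (mem_neighborFinset G v u).1 hu, hp⟩), mul_zero]
    · rfl

open Classical in
/-- if the vertex `v` lies on no even cycle and has neighbors `w₁, …, w_r`,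
then `p(G; z) = p(G − v; z) + z·∑ᵢ p(G − {v, wᵢ}; z)`. -/
theorem stmt5 [Fintype V] [DecidableEq V] (G : SimpleGraph V) (v : V)
    (hv : ∀ (a : V) (c : G.Walk a a), c.IsCycle → Even c.length → v ∉ c.support) :
    pmPoly G Finset.univ =
      pmPoly G (Finset.univ.erase v) +
        X * ∑ w ∈ G.neighborFinset v, pmPoly G ((Finset.univ.erase v).erase w) := by
  have hcyc : ∀ c : G.Walk v v, c.IsCycle → ¬Even c.length :=
    fun c hc heven => hv v c hc heven c.start_mem_support
  conv_lhs => rw [← Finset.insert_erase (Finset.mem_univ v)]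
  rw [pmPoly_insert G (Finset.notMem_erase v _)]
  congr 1
  rw [Finset.sum_congr rfl fun T hT => pmTerm_insert hcyc fun hvT =>
      Finset.notMem_erase v _ (Finset.mem_powerset.1 hT hvT), Finset.sum_comm, Finset.mul_sum]
  refine Finset.sum_congr rfl fun w hw => ?_
  have hwU : w ∈ Finset.univ.erase v :=
    Finset.mem_erase.2 ⟨((mem_neighborFinset G v w).1 hw).ne', Finset.mem_univ w⟩
  rw [Finset.sum_powerset_ite_mem hwU (fun T => X * pmTerm G T), pmPoly_eq_sum_pmTerm,
    Finset.mul_sum]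
end

section
/- If G' has a cut vertex v with G' = G ∪ H where G ∩ H = {v}, then every perfectly matchable set X of G' containing v decomposes uniquely: exactly one of |X ∩ (V(G) \ {v})| and |X ∩ (V(H) \ {v})| is even, and the sets X ∩ (V(G) \ {v}) and X ∩ (V(H) \ {v}), with v added to the odd one, are perfectly matchable sets of G and H respectively. -/
open Polynomial

variable {V : Type*}

def sym2ToFinset [DecidableEq V] : Sym2 V → Finset V :=
  Sym2.lift ⟨fun a b => {a, b}, fun a b => by simp [Finset.pair_comm]⟩

@[simp] lemma mem_sym2ToFinset [DecidableEq V] (x : V) (e : Sym2 V) :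
    x ∈ sym2ToFinset e ↔ x ∈ e := by
  induction e using Sym2.ind with
  | _ a b => simp [sym2ToFinset, Sym2.mem_iff]

lemma card_sym2ToFinset [DecidableEq V] (e : Sym2 V) (h : ¬ e.IsDiag) :
    (sym2ToFinset e).card = 2 := by
  induction e using Sym2.ind with
  | _ a b =>
    have : a ≠ b := by simpa using h
    simp [sym2ToFinset, Finset.card_insert_of_notMem, this]

lemma covers_card [DecidableEq V] {G : SimpleGraph V} {M : Finset (Sym2 V)} {S : Finset V}
    (hM : IsGraphMatching G M) (hc : Covers M S) : S.card = 2 * M.card := by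
  have hS : S = M.biUnion sym2ToFinset := by
    ext x
    simp only [Finset.mem_biUnion, mem_sym2ToFinset]
    exact hc x
  rw [hS, Finset.card_biUnion, Finset.sum_congr rfl (fun e he => card_sym2ToFinset e
    (G.not_isDiag_of_mem_edgeSet (hM.1 he))), Finset.sum_const, smul_eq_mul, mul_comm]
  intro e he f hf hef
  simp only [Finset.disjoint_left, mem_sym2ToFinset]
  intro x hx
  exact hM.2 e he f hf hef x hx

lemma filter_matching {G : SimpleGraph V} {M : Finset (Sym2 V)} (hM : IsGraphMatching G M)
    (p : Sym2 V → Prop) [DecidablePred p] : IsGraphMatching G (M.filter p) := by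
  refine ⟨fun e he => hM.1 (Finset.mem_of_mem_filter _ (by exact_mod_cast he)), ?_⟩
  intro e he f hf hef x hx
  exact hM.2 e (Finset.mem_of_mem_filter _ he) f (Finset.mem_of_mem_filter _ hf) hef x hx

lemma key_decomp [Fintype V] [DecidableEq V] (G' : SimpleGraph V) (A B : Finset V) (v : V)
    (hAB : A ∩ B = {v})
    (hedges : ∀ a b, G'.Adj a b → (a ∈ A ∧ b ∈ A) ∨ (a ∈ B ∧ b ∈ B))
    (Xs : Finset V) (hvX : v ∈ Xs) (M : Finset (Sym2 V))
    (hMm : IsGraphMatching G' M) (hMc : Covers M Xs)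
    (e0 : Sym2 V) (he0M : e0 ∈ M) (hve0 : v ∈ e0) (he0A : ∀ x ∈ e0, x ∈ A) :
    ¬ Even ((Xs ∩ A).erase v).card ∧ Even ((Xs ∩ B).erase v).card ∧
      IsPMS G' (insert v ((Xs ∩ A).erase v)) ∧ IsPMS G' ((Xs ∩ B).erase v) := by
  have hvA : v ∈ A := by have := hAB ▸ Finset.mem_singleton_self v; exact (Finset.mem_inter.mp this).1
  have hvB : v ∈ B := by have := hAB ▸ Finset.mem_singleton_self v; exact (Finset.mem_inter.mp this).2
  have hmemv : ∀ x, x ∈ A → x ∈ B → x = v := by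
    intro x hxA hxB
    have : x ∈ A ∩ B := Finset.mem_inter.mpr ⟨hxA, hxB⟩
    simpa [hAB] using this
  -- every edge of M lies in A or in B
  have hAorB : ∀ e ∈ M, (∀ x ∈ e, x ∈ A) ∨ (∀ x ∈ e, x ∈ B) := by
    intro e he
    induction e using Sym2.ind with
    | _ a b =>
      have hadj : G'.Adj a b := (SimpleGraph.mem_edgeSet G').mp (hMm.1 he)
      rcases hedges a b hadj with ⟨h1, h2⟩ | ⟨h1, h2⟩
      · left; intro x hx; rcases Sym2.mem_iff.mp hx with rfl | rfl <;> assumption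
      · right; intro x hx; rcases Sym2.mem_iff.mp hx with rfl | rfl <;> assumption
  -- e0 is the unique edge containing v
  have huniq : ∀ e ∈ M, v ∈ e → e = e0 := by
    intro e he hv
    by_contra hne
    exact hMm.2 e he e0 he0M hne v hv hve0
  set MA := M.filter (fun e => ∀ x ∈ e, x ∈ A) with hMA
  set MB := M.filter (fun e => ¬ ∀ x ∈ e, x ∈ A) with hMB
  have hMAc : Covers MA (Xs ∩ A) := by
    intro x
    constructor
    · intro hx
      obtain ⟨hxX, hxA⟩ := Finset.mem_inter.mp hx
      obtain ⟨e, he, hxe⟩ := (hMc x).mp hxX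
      rcases hAorB e he with hA | hB
      · exact ⟨e, Finset.mem_filter.mpr ⟨he, hA⟩, hxe⟩
      · have hxv : x = v := hmemv x hxA (hB x hxe)
        subst hxv
        have := huniq e he hxe
        subst this
        exact ⟨e, Finset.mem_filter.mpr ⟨he, he0A⟩, hxe⟩
    · rintro ⟨e, he, hxe⟩
      obtain ⟨heM, heA⟩ := Finset.mem_filter.mp he
      exact Finset.mem_inter.mpr ⟨(hMc x).mpr ⟨e, heM, hxe⟩, heA x hxe⟩
  have hMBc : Covers MB ((Xs ∩ B).erase v) := by
    intro x
    constructor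
    · intro hx
      have hxv : x ≠ v := Finset.ne_of_mem_erase hx
      obtain ⟨hxX, hxB⟩ := Finset.mem_inter.mp (Finset.mem_of_mem_erase hx)
      obtain ⟨e, he, hxe⟩ := (hMc x).mp hxX
      refine ⟨e, Finset.mem_filter.mpr ⟨he, ?_⟩, hxe⟩
      intro hall
      exact hxv (hmemv x (hall x hxe) hxB)
    · rintro ⟨e, he, hxe⟩
      obtain ⟨heM, heNA⟩ := Finset.mem_filter.mp he
      have heB : ∀ y ∈ e, y ∈ B := (hAorB e heM).resolve_left heNA
      have hxX : x ∈ Xs := (hMc x).mpr ⟨e, heM, hxe⟩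
      have hxv : x ≠ v := by
        rintro rfl
        exact heNA ((huniq e heM hxe) ▸ he0A)
      exact Finset.mem_erase.mpr ⟨hxv, Finset.mem_inter.mpr ⟨hxX, heB x hxe⟩⟩
  have hMAm : IsGraphMatching G' MA := filter_matching hMm _
  have hMBm : IsGraphMatching G' MB := filter_matching hMm _
  have hvXA : v ∈ Xs ∩ A := Finset.mem_inter.mpr ⟨hvX, hvA⟩
  have hins : insert v ((Xs ∩ A).erase v) = Xs ∩ A := Finset.insert_erase hvXA
  have hcardA : (Xs ∩ A).card = 2 * MA.card := covers_card hMAm hMAc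
  have hcardB : ((Xs ∩ B).erase v).card = 2 * MB.card := covers_card hMBm hMBc
  refine ⟨?_, ⟨2 * MB.card / 2, by omega⟩ , ⟨MA, hMAm, by rw [hins]; exact hMAc⟩, ⟨MB, hMBm, hMBc⟩⟩
  have : ((Xs ∩ A).erase v).card = (Xs ∩ A).card - 1 := Finset.card_erase_of_mem hvXA
  have hpos : 0 < (Xs ∩ A).card := Finset.card_pos.mpr ⟨v, hvXA⟩
  rw [Nat.even_iff, this, hcardA]
  omega

/-- if `v` is a cut vertex separating `G' = G ∪ H` (with `G = G'[A]`,
`H = G'[B]`, `A ∩ B = {v}`), then every perfectly matchable set `X` of `G'` containing `v`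
decomposes: exactly one of `|X ∩ (A − v)|`, `|X ∩ (B − v)|` is even, the even part is a
perfectly matchable set, and the odd part together with `v` is a perfectly matchable set. -/
theorem stmt8 [Fintype V] [DecidableEq V] (G' : SimpleGraph V) (A B : Finset V) (v : V)
    (hAB : A ∩ B = {v}) (hcover : A ∪ B = Finset.univ)
    (hedges : ∀ a b, G'.Adj a b → (a ∈ A ∧ b ∈ A) ∨ (a ∈ B ∧ b ∈ B))
    (Xs : Finset V) (hvX : v ∈ Xs) (hX : IsPMS G' Xs) :
    (Even ((Xs ∩ A).erase v).card ∧ ¬ Even ((Xs ∩ B).erase v).card ∧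
      IsPMS G' ((Xs ∩ A).erase v) ∧ IsPMS G' (insert v ((Xs ∩ B).erase v))) ∨
    (¬ Even ((Xs ∩ A).erase v).card ∧ Even ((Xs ∩ B).erase v).card ∧
      IsPMS G' (insert v ((Xs ∩ A).erase v)) ∧ IsPMS G' ((Xs ∩ B).erase v)) := by
  obtain ⟨M, hMm, hMc⟩ := hX
  obtain ⟨e0, he0M, hve0⟩ := (hMc v).mp hvX
  have hAorB : (∀ x ∈ e0, x ∈ A) ∨ (∀ x ∈ e0, x ∈ B) := by
    induction e0 using Sym2.ind with
    | _ a b =>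
      have hadj : G'.Adj a b := (SimpleGraph.mem_edgeSet G').mp (hMm.1 he0M)
      rcases hedges a b hadj with ⟨h1, h2⟩ | ⟨h1, h2⟩
      · left; intro x hx; rcases Sym2.mem_iff.mp hx with rfl | rfl <;> assumption
      · right; intro x hx; rcases Sym2.mem_iff.mp hx with rfl | rfl <;> assumption
  rcases hAorB with hA | hB
  · right
    exact key_decomp G' A B v hAB hedges Xs hvX M hMm hMc e0 he0M hve0 hA
  · left
    have h := key_decomp G' B A v (by rw [Finset.inter_comm]; exact hAB)
      (fun a b hadj => (hedges a b hadj).symm) Xs hvX M hMm hMc e0 he0M hve0 hB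
    exact ⟨h.2.1, h.1, h.2.2.2, h.2.2.1⟩
end

section
/- For all n ≥ 1, p(P_n; z) = u_{n+1}(1, z), where P_n is the path on n vertices and the polynomials u_n satisfy u_0 = 0, u_1 = 1, and u_n(x,y) = x·u_{n-1}(x,y) + y·u_{n-2}(x,y). -/
open Polynomial

variable {V : Type*}

/-- The Hoggatt–Long polynomials `u_n(x, y)`: `u₀ = 0`, `u₁ = 1`,
`u_n = x·u_{n−1} + y·u_{n−2}` (evaluated at elements of a commutative ring). -/
def hoggattLong {R : Type*} [CommRing R] (x y : R) : ℕ → R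
  | 0 => 0
  | 1 => 1
  | (n + 2) => x * hoggattLong x y (n + 1) + y * hoggattLong x y n


namespace Stmt9Aux

open Finset

/-- `T` has no two consecutive elements. -/
def NoConsec (T : Finset ℕ) : Prop := ∀ a ∈ T, a + 1 ∉ T

/-- `T ∪ (T+1)`. -/
def blow (T : Finset ℕ) : Finset ℕ := T ∪ T.image (· + 1)

lemma mem_blow {T : Finset ℕ} {x : ℕ} :
    x ∈ blow T ↔ x ∈ T ∨ ∃ a ∈ T, a + 1 = x := by
  simp [blow]

lemma subset_blow (T : Finset ℕ) : T ⊆ blow T := Finset.subset_union_left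

lemma blow_card {T : Finset ℕ} (hT : NoConsec T) : (blow T).card = 2 * T.card := by
  have hdisj : Disjoint T (T.image (· + 1)) := by
    rw [Finset.disjoint_left]
    intro x hx hx'
    obtain ⟨t, ht, rfl⟩ := Finset.mem_image.1 hx'
    exact hT t ht hx
  rw [blow, Finset.card_union_of_disjoint hdisj,
    Finset.card_image_of_injective _ (add_left_injective 1)]
  omega

lemma blow_min_mem {T : Finset ℕ} {a : ℕ} (h : a ∈ blow T)
    (hmin : ∀ x ∈ blow T, a ≤ x) : a ∈ T := by
  rcases mem_blow.1 h with h' | ⟨t, ht, rfl⟩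
  · exact h'
  · have := hmin t (subset_blow T ht); omega

lemma blow_erase {T : Finset ℕ} {a : ℕ} (hT : NoConsec T) (haT : a ∈ T)
    (hmin : ∀ x ∈ blow T, a ≤ x) :
    blow (T.erase a) = blow T \ {a, a + 1} := by
  ext x
  simp only [Finset.mem_sdiff, mem_blow, Finset.mem_insert, Finset.mem_singleton, not_or]
  constructor
  · rintro (hx | ⟨t, ht, rfl⟩)
    · rw [Finset.mem_erase] at hx
      refine ⟨Or.inl hx.2, hx.1, ?_⟩
      intro h; subst h; exact hT a haT hx.2
    · rw [Finset.mem_erase] at ht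
      have := hmin t (subset_blow T ht.2)
      exact ⟨Or.inr ⟨t, ht.2, rfl⟩, by omega, by omega⟩
  · rintro ⟨hx | ⟨t, ht, rfl⟩, h1, h2⟩
    · exact Or.inl (Finset.mem_erase.2 ⟨h1, hx⟩)
    · exact Or.inr ⟨t, Finset.mem_erase.2 ⟨by omega, ht⟩, rfl⟩

lemma blow_inj : ∀ T : Finset ℕ, NoConsec T → ∀ T' : Finset ℕ, NoConsec T' →
    blow T = blow T' → T = T' := by
  intro T
  induction T using Finset.strongInduction with
  | _ T ih =>
    intro hT T' hT' heq
    rcases T.eq_empty_or_nonempty with rfl | hne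
    · by_contra h
      obtain ⟨x, hx⟩ := Finset.nonempty_iff_ne_empty.2 (fun h' => h h'.symm)
      have hx' : x ∈ blow T' := subset_blow T' hx
      rw [← heq] at hx'
      simp [blow] at hx'
    · have hne' : (blow T).Nonempty := hne.mono (subset_blow T)
      set a := (blow T).min' hne' with ha
      have hmin : ∀ x ∈ blow T, a ≤ x := fun x hx => Finset.min'_le _ x hx
      have hmin' : ∀ x ∈ blow T', a ≤ x := by rw [← heq]; exact hmin
      have haT : a ∈ T := blow_min_mem ((blow T).min'_mem hne') hmin
      have haT' : a ∈ T' := blow_min_mem (heq ▸ (blow T).min'_mem hne') hmin'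
      have h1 := blow_erase hT haT hmin
      have h2 := blow_erase hT' haT' hmin'
      have hncE : NoConsec (T.erase a) := fun x hx h =>
        hT x (Finset.mem_of_mem_erase hx) (Finset.mem_of_mem_erase h)
      have hncE' : NoConsec (T'.erase a) := fun x hx h =>
        hT' x (Finset.mem_of_mem_erase hx) (Finset.mem_of_mem_erase h)
      have hE := ih (T.erase a) (Finset.erase_ssubset haT) hncE (T'.erase a) hncE'
        (by rw [h1, h2, heq])
      calc T = insert a (T.erase a) := (Finset.insert_erase haT).symm
        _ = insert a (T'.erase a) := by rw [hE]
        _ = T' := Finset.insert_erase haT'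

/-! ### Path graph part -/

/-- min of the two values of an edge -/
def fmin {n : ℕ} : Sym2 (Fin n) → ℕ :=
  Sym2.lift ⟨fun x y => min x.val y.val, fun _ _ => min_comm _ _⟩

lemma fmin_mk {n : ℕ} (u v : Fin n) : fmin s(u, v) = min u.val v.val := rfl

lemma path_edge {n : ℕ} {e : Sym2 (Fin n)}
    (he : e ∈ (SimpleGraph.pathGraph n).edgeSet) :
    ∃ (a : ℕ) (h : a + 1 < n),
      e = s(⟨a, Nat.lt_of_succ_lt h⟩, ⟨a + 1, h⟩) ∧ fmin e = a := by
  induction e using Sym2.ind with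
  | _ u v =>
    rw [SimpleGraph.mem_edgeSet, SimpleGraph.pathGraph_adj] at he
    rcases he with h | h
    · have hv : (u : ℕ) + 1 < n := h ▸ v.isLt
      refine ⟨u.val, hv, ?_, ?_⟩
      · have h2 : (⟨(u : ℕ) + 1, hv⟩ : Fin n) = v := Fin.ext h
        rw [Fin.eta, h2]
      · rw [fmin_mk]; omega
    · have hu : (v : ℕ) + 1 < n := h ▸ u.isLt
      refine ⟨v.val, hu, ?_, ?_⟩
      · have h2 : (⟨(v : ℕ) + 1, hu⟩ : Fin n) = u := Fin.ext h
        rw [Sym2.eq_swap, Fin.eta, h2]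
      · rw [fmin_mk]; omega

lemma mem_val_image {n : ℕ} {S : Finset (Fin n)} {x : Fin n} :
    x.val ∈ S.image Fin.val ↔ x ∈ S := by
  constructor
  · intro h
    obtain ⟨y, hy, hyx⟩ := Finset.mem_image.1 h
    exact Fin.val_injective hyx ▸ hy
  · exact Finset.mem_image_of_mem _

lemma isPMS_iff {n : ℕ} (S : Finset (Fin n)) :
    IsPMS (SimpleGraph.pathGraph n) S ↔
      ∃ T : Finset ℕ, (∀ a ∈ T, a + 1 < n) ∧ NoConsec T ∧
        S.image Fin.val = blow T := by
  constructor
  · rintro ⟨M, ⟨hsub, hdisj⟩, hcov⟩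
    have key : ∀ e ∈ M, ∃ (a : ℕ) (h : a + 1 < n),
        e = s(⟨a, Nat.lt_of_succ_lt h⟩, ⟨a + 1, h⟩) ∧ fmin e = a :=
      fun e he => path_edge (hsub he)
    refine ⟨M.image fmin, ?_, ?_, ?_⟩
    · intro a ha
      obtain ⟨e, he, rfl⟩ := Finset.mem_image.1 ha
      obtain ⟨a', h', _, hf⟩ := key e he
      omega
    · intro a ha ha1
      obtain ⟨e, he, hfe⟩ := Finset.mem_image.1 ha
      obtain ⟨e', he', hfe'⟩ := Finset.mem_image.1 ha1
      obtain ⟨a1, h1, he1, hf1⟩ := key e he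
      obtain ⟨a2, h2, he2, hf2⟩ := key e' he'
      have ha1eq : a1 = a := by omega
      subst ha1eq
      have ha2eq : a2 = a1 + 1 := by omega
      subst ha2eq
      have hne : e ≠ e' := by
        intro h; rw [h, hf2] at hf1; omega
      exact hdisj e he e' he' hne ⟨a1 + 1, h1⟩
        (he1 ▸ Sym2.mem_iff.2 (Or.inr rfl))
        (he2 ▸ Sym2.mem_iff.2 (Or.inl (Fin.ext rfl)))
    · ext b
      rw [mem_blow]
      constructor
      · intro hb
        obtain ⟨x, hx, rfl⟩ := Finset.mem_image.1 hb
        obtain ⟨e, he, hxe⟩ := (hcov x).1 hx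
        obtain ⟨a, h, he', hf⟩ := key e he
        rw [he', Sym2.mem_iff] at hxe
        rcases hxe with rfl | rfl
        · exact Or.inl (Finset.mem_image.2 ⟨e, he, hf⟩)
        · exact Or.inr ⟨a, Finset.mem_image.2 ⟨e, he, hf⟩, rfl⟩
      · intro hb
        have hex : ∃ e ∈ M, fmin e = b ∨ fmin e + 1 = b := by
          rcases hb with hb | ⟨t, ht, rfl⟩
          · obtain ⟨e, he, hf⟩ := Finset.mem_image.1 hb
            exact ⟨e, he, Or.inl hf⟩
          · obtain ⟨e, he, hf⟩ := Finset.mem_image.1 ht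
            exact ⟨e, he, Or.inr (by omega)⟩
        obtain ⟨e, he, hf⟩ := hex
        obtain ⟨a, h, he', hfa⟩ := key e he
        rcases hf with hf | hf
        · exact Finset.mem_image.2 ⟨⟨a, Nat.lt_of_succ_lt h⟩,
            (hcov _).2 ⟨e, he, he' ▸ Sym2.mem_iff.2 (Or.inl rfl)⟩, by show a = b; omega⟩
        · exact Finset.mem_image.2 ⟨⟨a + 1, h⟩,
            (hcov _).2 ⟨e, he, he' ▸ Sym2.mem_iff.2 (Or.inr rfl)⟩, by show a + 1 = b; omega⟩
  · rintro ⟨T, hb, hnc, him⟩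
    have hmemS : ∀ x : Fin n, x ∈ S ↔ x.val ∈ blow T := by
      intro x; rw [← him, mem_val_image]
    refine ⟨T.attach.image (fun a =>
      s(⟨a.1, Nat.lt_of_succ_lt (hb a.1 a.2)⟩, ⟨a.1 + 1, hb a.1 a.2⟩)), ⟨?_, ?_⟩, ?_⟩
    · intro e he
      obtain ⟨a, _, rfl⟩ := Finset.mem_image.1 he
      rw [SimpleGraph.mem_edgeSet, SimpleGraph.pathGraph_adj]
      exact Or.inl rfl
    · intro e he f hf hef x hxe hxf
      obtain ⟨a, _, rfl⟩ := Finset.mem_image.1 he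
      obtain ⟨b, _, rfl⟩ := Finset.mem_image.1 hf
      rw [Sym2.mem_iff] at hxe hxf
      have hab : a.1 ≠ b.1 := by
        intro h
        have hab' : a = b := Subtype.ext h
        subst hab'
        exact hef rfl
      have h1 : a.1 + 1 ∉ T := hnc a.1 a.2
      have h2 : b.1 + 1 ∉ T := hnc b.1 b.2
      have hxa : x.val = a.1 ∨ x.val = a.1 + 1 := by
        rcases hxe with rfl | rfl <;> simp
      have hxb : x.val = b.1 ∨ x.val = b.1 + 1 := by
        rcases hxf with rfl | rfl <;> simp
      rcases hxa with h | h <;> rcases hxb with h' | h'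
      · exact hab (by omega)
      · exact h2 (by rw [show b.1 + 1 = a.1 by omega]; exact a.2)
      · exact h1 (by rw [show a.1 + 1 = b.1 by omega]; exact b.2)
      · exact hab (by omega)
    · intro x
      rw [hmemS, mem_blow]
      constructor
      · intro h
        have hex : ∃ a ∈ T, x.val = a ∨ x.val = a + 1 := by
          rcases h with h | ⟨t, ht, h⟩
          · exact ⟨x.val, h, Or.inl rfl⟩
          · exact ⟨t, ht, Or.inr h.symm⟩
        obtain ⟨a, ha, hx⟩ := hex
        refine ⟨s(⟨a, Nat.lt_of_succ_lt (hb a ha)⟩, ⟨a + 1, hb a ha⟩),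
          Finset.mem_image.2 ⟨⟨a, ha⟩, Finset.mem_attach _ _, rfl⟩, ?_⟩
        rw [Sym2.mem_iff]
        rcases hx with h | h
        · exact Or.inl (Fin.ext h)
        · exact Or.inr (Fin.ext h)
      · rintro ⟨e, he, hxe⟩
        obtain ⟨a, _, rfl⟩ := Finset.mem_image.1 he
        rw [Sym2.mem_iff] at hxe
        rcases hxe with rfl | rfl
        · exact Or.inl a.2
        · exact Or.inr ⟨a.1, a.2, rfl⟩

lemma card_of_blow {n : ℕ} {S : Finset (Fin n)} {T : Finset ℕ}
    (hnc : NoConsec T) (him : S.image Fin.val = blow T) :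
    S.card = 2 * T.card := by
  rw [← Finset.card_image_of_injective S Fin.val_injective, him, blow_card hnc]

lemma blow_lt {m : ℕ} {T : Finset ℕ} (hT : T ⊆ Finset.range m) :
    ∀ x ∈ blow T, x < m + 1 := by
  intro x hx
  rcases mem_blow.1 hx with h | ⟨t, ht, rfl⟩
  · have := Finset.mem_range.1 (hT h); omega
  · have := Finset.mem_range.1 (hT ht); omega

lemma image_val_filter {m : ℕ} {T : Finset ℕ} (hT : ∀ x ∈ blow T, x < m + 1) :
    ((Finset.univ.filter (fun x : Fin (m + 1) => x.val ∈ blow T)).image Fin.val : Finset ℕ)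
      = blow T := by
  classical
  ext b
  simp only [Finset.mem_image, Finset.mem_filter, Finset.mem_univ, true_and]
  constructor
  · rintro ⟨x, hx, rfl⟩; exact hx
  · intro hb; exact ⟨⟨b, hT b hb⟩, hb, rfl⟩

/-! ### The sparse-set polynomial -/

open Classical

noncomputable def spoly (m : ℕ) : Polynomial ℤ :=
  ∑ T ∈ (Finset.range m).powerset, if NoConsec T then (X : Polynomial ℤ) ^ T.card else 0

lemma spoly_zero : spoly 0 = 1 := by
  simp [spoly, NoConsec]

lemma spoly_one : spoly 1 = 1 + X := by
  have key : spoly 1 = spoly 0 + ∑ T ∈ (Finset.range 0).powerset,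
      (if NoConsec (insert 0 T) then (X : Polynomial ℤ) ^ (insert 0 T).card else 0) := by
    rw [spoly, Finset.range_add_one, Finset.sum_powerset_insert (by simp), ← spoly]
  rw [key, spoly_zero]
  have h2 : NoConsec ({0} : Finset ℕ) := by intro a ha h; simp at ha h
  simp [h2]

lemma spoly_rec (m : ℕ) : spoly (m + 2) = spoly (m + 1) + X * spoly m := by
  have key : spoly (m + 2) = spoly (m + 1) + ∑ T ∈ (Finset.range (m + 1)).powerset,
      (if NoConsec (insert (m + 1) T) then (X : Polynomial ℤ) ^ (insert (m + 1) T).card else 0) := by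
    rw [spoly, Finset.range_add_one, Finset.sum_powerset_insert (by simp), ← spoly]
  rw [key]
  congr 1
  rw [Finset.range_add_one, Finset.sum_powerset_insert (by simp : m ∉ Finset.range m)]
  have hz : ∀ T ∈ (Finset.range m).powerset,
      (if NoConsec (insert (m + 1) (insert m T)) then
        (X : Polynomial ℤ) ^ (insert (m + 1) (insert m T)).card else 0) = 0 := by
    intro T hT
    rw [if_neg]
    intro h
    exact h m (Finset.mem_insert_of_mem (Finset.mem_insert_self m T))
      (Finset.mem_insert_self (m + 1) _)
  rw [Finset.sum_congr rfl hz, Finset.sum_const_zero, add_zero]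
  rw [spoly, Finset.mul_sum]
  apply Finset.sum_congr rfl
  intro T hT
  have hTsub := Finset.mem_powerset.1 hT
  have hbound : ∀ a ∈ T, a < m := fun a ha => Finset.mem_range.1 (hTsub ha)
  have hm1 : m + 1 ∉ T := fun h => by have := hbound _ h; omega
  have hiff : NoConsec (insert (m + 1) T) ↔ NoConsec T := by
    constructor
    · intro h a ha h'
      exact h a (Finset.mem_insert_of_mem ha) (Finset.mem_insert_of_mem h')
    · intro h a ha h'
      rcases Finset.mem_insert.1 ha with rfl | ha
      · rcases Finset.mem_insert.1 h' with h' | h'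
        · omega
        · have := hbound _ h'; omega
      · rcases Finset.mem_insert.1 h' with h'' | h''
        · have := hbound _ ha; omega
        · exact h a ha h''
  rw [Finset.card_insert_of_notMem hm1]
  by_cases hc : NoConsec T
  · rw [if_pos (hiff.2 hc), if_pos hc]; ring
  · rw [if_neg (fun h => hc (hiff.1 h)), if_neg hc, mul_zero]

lemma spoly_eq : ∀ m : ℕ, spoly m = hoggattLong (1 : Polynomial ℤ) X (m + 2)
  | 0 => by
    rw [spoly_zero]
    show (1 : Polynomial ℤ) = 1 * hoggattLong 1 X 1 + X * hoggattLong 1 X 0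
    simp [hoggattLong]
  | 1 => by
    rw [spoly_one]
    show (1 : Polynomial ℤ) + X = 1 * hoggattLong 1 X 2 + X * hoggattLong 1 X 1
    show (1 : Polynomial ℤ) + X = 1 * (1 * hoggattLong 1 X 1 + X * hoggattLong 1 X 0) + X * hoggattLong 1 X 1
    simp [hoggattLong]
  | (m + 2) => by
    rw [spoly_rec, spoly_eq (m + 1), spoly_eq m]
    show _ = 1 * hoggattLong (1 : Polynomial ℤ) X (m + 3) + X * hoggattLong 1 X (m + 2)
    ring

end Stmt9Aux

/-- for all `n ≥ 1`, `p(P_n; z) = u_{n+1}(1, z)`. -/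
theorem stmt9 (n : ℕ) (hn : 1 ≤ n) :
    pmPoly (SimpleGraph.pathGraph n) Finset.univ =
      hoggattLong (1 : Polynomial ℤ) X (n + 1) := by
  classical
  obtain ⟨m, rfl⟩ : ∃ m, n = m + 1 := ⟨n - 1, by omega⟩
  rw [show m + 1 + 1 = m + 2 from rfl, ← Stmt9Aux.spoly_eq m, pmPoly, Stmt9Aux.spoly,
    ← Finset.sum_filter, ← Finset.sum_filter]
  refine (Finset.sum_bij
    (fun (T : Finset ℕ) (_ : T ∈ (Finset.range m).powerset.filter Stmt9Aux.NoConsec) =>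
      Finset.univ.filter (fun x : Fin (m + 1) => x.val ∈ Stmt9Aux.blow T))
    ?_ ?_ ?_ ?_).symm
  · intro T hT
    rw [Finset.mem_filter] at hT ⊢
    obtain ⟨hTp, hTnc⟩ := hT
    have hTsub := Finset.mem_powerset.1 hTp
    refine ⟨Finset.mem_powerset.2 (Finset.subset_univ _), ?_⟩
    rw [Stmt9Aux.isPMS_iff]
    exact ⟨T, fun a ha => by have := Finset.mem_range.1 (hTsub ha); omega, hTnc,
      Stmt9Aux.image_val_filter (Stmt9Aux.blow_lt hTsub)⟩
  · intro T1 h1 T2 h2 heq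
    rw [Finset.mem_filter] at h1 h2
    have e1 := Stmt9Aux.image_val_filter (m := m) (Stmt9Aux.blow_lt (Finset.mem_powerset.1 h1.1))
    have e2 := Stmt9Aux.image_val_filter (m := m) (Stmt9Aux.blow_lt (Finset.mem_powerset.1 h2.1))
    apply Stmt9Aux.blow_inj T1 h1.2 T2 h2.2
    rw [← e1, ← e2]
    exact congrArg (Finset.image Fin.val) heq
  · intro S hS
    rw [Finset.mem_filter] at hS
    obtain ⟨-, hpms⟩ := hS
    obtain ⟨T, hb, hnc, him⟩ := (Stmt9Aux.isPMS_iff S).1 hpms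
    have hTsub : T ⊆ Finset.range m := fun a ha => Finset.mem_range.2 (by have := hb a ha; omega)
    refine ⟨T, Finset.mem_filter.2 ⟨Finset.mem_powerset.2 hTsub, hnc⟩, ?_⟩
    ext x
    rw [Finset.mem_filter]
    simp only [Finset.mem_univ, true_and]
    rw [← him, Stmt9Aux.mem_val_image]
  · intro T hT
    rw [Finset.mem_filter] at hT
    have hTsub := Finset.mem_powerset.1 hT.1
    have hcard := Stmt9Aux.card_of_blow hT.2
      (Stmt9Aux.image_val_filter (Stmt9Aux.blow_lt hTsub))
    rw [hcard]
    congr 1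
    omega
end

section
/- For odd n ≥ 3, p(C_n; z) = u_{n+1}(1, z) + z·u_{n-1}(1, z), where C_n is the cycle on n vertices. -/
open Polynomial

variable {V : Type*}

/-!
Two different perfect matchings of the same vertex set of `C_n` would alternate around the
whole cycle, which is impossible for `n` odd. So the perfectly matchable sets of `C_n` are in
bijection with its matchings, and a matching is encoded by the set `M ⊆ ℤ/n` of the `i` with
`{i, i + 1}` in it, the condition being that no two elements of `M` are cyclically consecutive.
Such sets are the independent sets of the graph `i ~ f i` with `f i = (i + 1) % n` on
`{0, …, n - 1}`, and the deletion–contraction recursion `I(G) = I(G - x) + z·I(G - N[x])` at the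
vertex `n - 1` reduces them to the paths on `{0, …, n - 2}` and `{1, …, n - 3}`, whose
independence polynomials satisfy the Hoggatt–Long recursion by the same step.
-/

open Finset

section IndepPoly

variable {α β : Type*}

def IsIndepFor (f : α → α) (T : Finset α) : Prop := ∀ i ∈ T, f i ∉ T

open Classical in
noncomputable def indepPoly (f : α → α) (s : Finset α) : ℤ[X] :=
  ∑ T ∈ s.powerset, if IsIndepFor f T then X ^ #T else 0

lemma indepPoly_congr {f g : α → α} {s : Finset α} (h : ∀ i ∈ s, f i = g i) :
    indepPoly f s = indepPoly g s := by
  classical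
  refine sum_congr rfl fun T hT => ?_
  have hfg : IsIndepFor f T ↔ IsIndepFor g T :=
    forall₂_congr fun i hi => by rw [h i (mem_powerset.1 hT hi)]
  exact if_congr hfg rfl rfl

lemma indepPoly_image [DecidableEq β] {e : α → β} (he : e.Injective) {f : α → α} {g : β → β}
    {s : Finset α} (hfg : ∀ a ∈ s, e (f a) = g (e a)) :
    indepPoly g (s.image e) = indepPoly f s := by
  classical
  rw [indepPoly, powerset_image, sum_image fun _ _ _ _ h => image_injective he h]
  refine sum_congr rfl fun T hT => ?_
  have hindep : IsIndepFor g (T.image e) ↔ IsIndepFor f T := by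
    rw [IsIndepFor, forall_mem_image]
    exact forall₂_congr fun i hi => by rw [← hfg i (mem_powerset.1 hT hi), he.mem_finset_image]
  rw [card_image_of_injective _ he]
  exact if_congr hindep rfl rfl

lemma isIndepFor_insert_iff [DecidableEq α] {f : α → α} {s T : Finset α} {x : α}
    (hfx : f x ≠ x) (hT : T ⊆ s) :
    IsIndepFor f (insert x T) ↔ IsIndepFor f T ∧ T ⊆ (s.erase (f x)).filter (f · ≠ x) := by
  simp only [IsIndepFor, mem_insert, subset_iff, mem_filter, mem_erase]
  grind

lemma indepPoly_insert [DecidableEq α] {f : α → α} {s : Finset α} {x : α} (hx : x ∉ s)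
    (hfx : f x ≠ x) :
    indepPoly f (insert x s) = indepPoly f s + X * indepPoly f ((s.erase (f x)).filter (f · ≠ x)) := by
  classical
  set B := (s.erase (f x)).filter (f · ≠ x)
  have hB : B ⊆ s := (filter_subset _ _).trans (erase_subset _ _)
  rw [indepPoly, sum_powerset_insert hx, indepPoly, indepPoly, mul_sum]
  congr 1
  rw [← sum_subset (powerset_mono.2 hB)]
  · refine sum_congr rfl fun T hT => ?_
    have hTs := (mem_powerset.1 hT).trans hB
    rw [card_insert_of_notMem fun h => hx (hTs h), pow_succ', mul_ite, mul_zero]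
    exact if_congr (by rw [isIndepFor_insert_iff hfx hTs, and_iff_left (mem_powerset.1 hT)]) rfl rfl
  · intro T hT hTB
    refine if_neg fun h => hTB (mem_powerset.2 ?_)
    exact ((isIndepFor_insert_iff hfx (mem_powerset.1 hT)).1 h).2

lemma indepPoly_empty (f : α → α) : indepPoly f ∅ = 1 := by
  simp [indepPoly, IsIndepFor]

end IndepPoly

lemma indepPoly_succ_Ico (a : ℕ) :
    ∀ L, indepPoly (· + 1) (Ico a (a + L)) = hoggattLong (1 : ℤ[X]) X (L + 2)
  | 0 => by simp [indepPoly_empty, hoggattLong]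
  | 1 => by
    rw [show Ico a (a + 1) = insert a ∅ by simp, indepPoly_insert (notMem_empty a) (by simp)]
    simp [indepPoly_empty, hoggattLong]
  | L + 2 => by
    have hB : ((Ico a (a + L + 1)).erase (a + L + 1 + 1)).filter (· + 1 ≠ a + L + 1) =
        Ico a (a + L) := by
      ext i; simp only [mem_filter, mem_erase, mem_Ico]; omega
    rw [show a + (L + 2) = a + L + 1 + 1 by omega, ← insert_Ico_right_eq_Ico_add_one (by omega),
      indepPoly_insert (by simp) (by omega), hB, add_assoc a L 1, indepPoly_succ_Ico a (L + 1),
      indepPoly_succ_Ico a L]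
    simp only [hoggattLong, one_mul]

lemma indepPoly_succ_mod_range (m : ℕ) :
    indepPoly (fun i => (i + 1) % (m + 3)) (range (m + 3)) =
      hoggattLong (1 : ℤ[X]) X (m + 4) + X * hoggattLong (1 : ℤ[X]) X (m + 2) := by
  have hlt : ∀ i ∈ range (m + 2), (i + 1) % (m + 3) = i + 1 := fun i hi =>
    Nat.mod_eq_of_lt (by rw [mem_range] at hi; omega)
  have hB : ((range (m + 2)).erase ((m + 2 + 1) % (m + 3))).filter
      (fun i => (i + 1) % (m + 3) ≠ m + 2) = Ico 1 (1 + m) := by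
    ext i
    have hwrap : (m + 2 + 1) % (m + 3) = 0 := Nat.mod_self _
    simp only [mem_filter, mem_erase, mem_range, mem_Ico, hwrap]
    by_cases hi : i < m + 2
    · rw [Nat.mod_eq_of_lt (by omega : i + 1 < m + 3)]
      omega
    · omega
  have hpath := indepPoly_succ_Ico 0 (m + 2)
  rw [zero_add] at hpath
  rw [range_add_one, indepPoly_insert (by simp) (by simp), hB, indepPoly_congr hlt,
    indepPoly_congr fun i hi => hlt i (by rw [mem_Ico] at hi; rw [mem_range]; omega), range_eq_Ico,
    hpath, indepPoly_succ_Ico 1 m]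

lemma indepPoly_fin_succ_univ (n : ℕ) [NeZero n] :
    indepPoly (· + 1 : Fin n → Fin n) univ = indepPoly (fun i => (i + 1) % n) (range n) := by
  rw [← image_fin_univ, indepPoly_image Fin.val_injective]
  intro i _
  rw [Fin.val_add, Fin.val_one', Nat.add_mod_mod]

open Fin.NatCast in
lemma Fin.natCast_ne_zero_of_lt {n k : ℕ} [NeZero n] (hk0 : 0 < k) (hkn : k < n) :
    (k : Fin n) ≠ 0 := by
  rw [Ne, Fin.natCast_eq_zero]
  exact Nat.not_dvd_of_pos_of_lt hk0 hkn

namespace CycleGraph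

open SimpleGraph Fin.NatCast Fin.CommRing

variable {n : ℕ} [NeZero n]

lemma adj_iff (hn : 2 ≤ n) {u v : Fin n} :
    (cycleGraph n).Adj u v ↔ u = v + 1 ∨ v = u + 1 := by
  obtain ⟨m, rfl⟩ := Nat.exists_eq_add_of_le' hn
  rw [cycleGraph_adj, sub_eq_iff_eq_add, sub_eq_iff_eq_add, add_comm 1 v, add_comm 1 u]

def cover (M : Finset (Fin n)) : Finset (Fin n) := M ∪ M.image (· + 1)

lemma isPerfectMatchingOn_cover (hn : 2 ≤ n) {M : Finset (Fin n)} (hM : IsIndepFor (· + 1) M) :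
    IsPerfectMatchingOn (cycleGraph n) (M.image fun i => s(i, i + 1)) (cover M) := by
  refine ⟨⟨?_, ?_⟩, fun x => ?_⟩
  · simp only [coe_image, Set.image_subset_iff]
    exact fun i _ => (adj_iff hn).2 (Or.inr rfl)
  · simp only [mem_image]
    rintro _ ⟨i, hi, rfl⟩ _ ⟨j, hj, rfl⟩ hij x hxi hxj
    rw [Sym2.mem_iff] at hxi hxj
    rcases hxi with rfl | rfl <;> rcases hxj with h | h
    · exact hij (by rw [h])
    · exact hM j hj (by beta_reduce; rwa [← h])
    · exact hM i hi (by beta_reduce; rwa [h])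
    · exact hij (by rw [add_right_cancel h])
  · simp only [cover, mem_union, mem_image]
    constructor
    · rintro (hx | ⟨i, hi, rfl⟩)
      · exact ⟨_, ⟨x, hx, rfl⟩, Sym2.mem_mk_left _ _⟩
      · exact ⟨_, ⟨i, hi, rfl⟩, Sym2.mem_mk_right _ _⟩
    · rintro ⟨_, ⟨i, hi, rfl⟩, hx⟩
      rcases Sym2.mem_iff.1 hx with rfl | rfl
      · exact Or.inl hi
      · exact Or.inr ⟨i, hi, rfl⟩

lemma card_cover {M : Finset (Fin n)} (hM : IsIndepFor (· + 1) M) : #(cover M) = 2 * #M := by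
  have hdisj : Disjoint M (M.image (· + 1)) := by
    simp only [disjoint_right, mem_image]
    rintro _ ⟨j, hj, rfl⟩ hx
    exact hM j hj hx
  rw [cover, card_union_of_disjoint hdisj, card_image_of_injective _ (add_left_injective 1)]
  omega

lemma exists_cover_eq_of_isPMS (hn : 3 ≤ n) {S : Finset (Fin n)} (hS : IsPMS (cycleGraph n) S) :
    ∃ M, IsIndepFor (· + 1) M ∧ cover M = S := by
  classical
  obtain ⟨F, ⟨hFG, hF⟩, hFS⟩ := hS
  have hedge : ∀ e ∈ F, ∃ i, e = s(i, i + 1) := by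
    refine Sym2.ind (fun u v he => ?_)
    rcases (adj_iff (by omega)).1 (hFG he) with h | h
    · exact ⟨v, by rw [show u = v + 1 from h, Sym2.eq_swap]⟩
    · exact ⟨u, by rw [show v = u + 1 from h]⟩
  refine ⟨univ.filter fun i => s(i, i + 1) ∈ F, fun i hi hi1 => ?_, ?_⟩
  · rw [mem_filter] at hi hi1
    have h1 : (1 : Fin n) ≠ 0 := by exact_mod_cast Fin.natCast_ne_zero_of_lt one_pos (by omega)
    have h2 : (2 : Fin n) ≠ 0 := by exact_mod_cast Fin.natCast_ne_zero_of_lt two_pos (by omega)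
    have hne : s(i, i + 1) ≠ s(i + 1, i + 1 + 1) := by
      rw [Ne, Sym2.eq_iff, left_eq_add, add_assoc, left_eq_add, one_add_one_eq_two]
      tauto
    exact hF _ hi.2 _ hi1.2 hne (i + 1) (Sym2.mem_mk_right _ _) (Sym2.mem_mk_left _ _)
  · ext x
    simp only [hFS x, cover, mem_union, mem_image, mem_filter, mem_univ, true_and]
    constructor
    · rintro (hx | ⟨i, hi, rfl⟩)
      · exact ⟨_, hx, Sym2.mem_mk_left _ _⟩
      · exact ⟨_, hi, Sym2.mem_mk_right _ _⟩
    · rintro ⟨e, he, hx⟩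
      obtain ⟨i, rfl⟩ := hedge e he
      rcases Sym2.mem_iff.1 hx with rfl | rfl
      · exact Or.inl he
      · exact Or.inr ⟨i, he, rfl⟩

lemma sub_one_mem_of_cover_eq {M M' : Finset (Fin n)} (hM : IsIndepFor (· + 1) M)
    (h : cover M = cover M') {x : Fin n} (hx : x ∈ M) (hx' : x ∉ M') : x - 1 ∈ M' ∧ x - 1 ∉ M := by
  have hxc : x ∈ cover M' := h ▸ mem_union_left _ hx
  rw [cover, mem_union, mem_image] at hxc
  obtain hxM' | ⟨j, hj, rfl⟩ := hxc
  · exact absurd hxM' hx'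
  · rw [add_sub_cancel_right]
    exact ⟨hj, fun hjM => hM j hjM hx⟩

lemma subset_of_cover_eq (hodd : Odd n) {M M' : Finset (Fin n)} (hM : IsIndepFor (· + 1) M)
    (hM' : IsIndepFor (· + 1) M') (h : cover M = cover M') : M ⊆ M' := by
  intro x hx
  by_contra hx'
  have hstep : ∀ k : ℕ, x - (2 * k : ℕ) ∈ M ∧ x - (2 * k : ℕ) ∉ M' := by
    intro k
    induction k with
    | zero => simpa using ⟨hx, hx'⟩
    | succ k ih =>
      obtain ⟨h1, h2⟩ := sub_one_mem_of_cover_eq hM h ih.1 ih.2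
      obtain ⟨h3, h4⟩ := sub_one_mem_of_cover_eq hM' h.symm h1 h2
      rw [show x - (2 * (k + 1) : ℕ) = x - (2 * k : ℕ) - 1 - 1 by push_cast; ring]
      exact ⟨h3, h4⟩
  obtain ⟨k, hk⟩ := hodd
  have hwrap : ((2 * k : ℕ) : Fin n) + 1 = 0 := by
    rw [← Nat.cast_add_one, ← hk, Fin.natCast_self]
  have := (sub_one_mem_of_cover_eq hM h (hstep k).1 (hstep k).2).1
  rw [sub_sub, hwrap, sub_zero] at this
  exact hx' this

lemma pmPoly_eq_indepPoly (hn : 3 ≤ n) (hodd : Odd n) :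
    pmPoly (cycleGraph n) univ = indepPoly (· + 1) (univ : Finset (Fin n)) := by
  classical
  rw [pmPoly, indepPoly, ← sum_filter, ← sum_filter]
  symm
  refine sum_nbij cover ?_ ?_ ?_ ?_
  · simp only [mem_filter, mem_powerset, subset_univ, true_and]
    exact fun M hM => ⟨_, isPerfectMatchingOn_cover (by omega) hM⟩
  · intro M hM M' hM' h
    replace hM := (mem_filter.1 hM).2
    replace hM' := (mem_filter.1 hM').2
    exact (subset_of_cover_eq hodd hM hM' h).antisymm (subset_of_cover_eq hodd hM' hM h.symm)
  · intro S hS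
    obtain ⟨M, hM, rfl⟩ := exists_cover_eq_of_isPMS hn (mem_filter.1 hS).2
    exact ⟨M, by simpa using hM, rfl⟩
  · intro M hM
    rw [card_cover (mem_filter.1 hM).2, Nat.mul_div_cancel_left _ two_pos]

end CycleGraph

/-- for odd `n ≥ 3`, `p(C_n; z) = u_{n+1}(1, z) + z·u_{n−1}(1, z)`. -/
theorem stmt10 (n : ℕ) (hn : 3 ≤ n) (hodd : Odd n) :
    pmPoly (SimpleGraph.cycleGraph n) Finset.univ =
      hoggattLong (1 : Polynomial ℤ) X (n + 1) + X * hoggattLong (1 : Polynomial ℤ) X (n - 1) := by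
  obtain ⟨m, rfl⟩ := Nat.exists_eq_add_of_le' hn
  rw [CycleGraph.pmPoly_eq_indepPoly hn hodd, indepPoly_fin_succ_univ, indepPoly_succ_mod_range]
  rfl
end

section
/- For even n ≥ 4, p(C_n; z) = u_{n+1}(1, z) + z·u_{n-1}(1, z) − z^{n/2}. -/
open Polynomial

variable {V : Type*}

/-!
A set `M` of vertices of `C_n`, no two of them cyclically consecutive, determines the edges
`{i, i+1}` for `i ∈ M`; they perfectly match the induced subgraph on `M ∪ (M + 1)`, a set of
size `2|M|`, and every perfect matching of an induced subgraph arises this way. If two different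
`M` cover the same set, their symmetric difference is closed under `i ↦ i + 1`, so the covered
set is all of `C_n`. For even `n` exactly two `M` cover everything, the even and the odd
vertices, each of size `n/2`. Hence `p(C_n; z) = I(C_n; z) - z^{n/2}` with `I` the independence
polynomial. Splitting on the last vertex gives `I(C_n) = I(P_{n-1}) + z I(P_{n-3})`, and
`I(P_m) = u_{m+2}(1, z)` because both sides satisfy the recurrence of `u`.
-/

open Finset

theorem Finset.sum_powerset_map {α β M : Type*} [AddCommMonoid M] (f : α ↪ β) (s : Finset α)
    (g : Finset β → M) : ∑ t ∈ (s.map f).powerset, g t = ∑ t ∈ s.powerset, g (t.map f) := by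
  classical
  simp_rw [map_eq_image, powerset_image]
  exact sum_image (image_injOn_powerset_of_injOn f.injective.injOn)

theorem Finset.sum_powerset_range_add_one_ite_notMem {M : Type*} [AddCommMonoid M] (m : ℕ)
    (p : Finset ℕ → Prop) [DecidablePred p] (f : Finset ℕ → M) :
    ∑ t ∈ (range (m + 1)).powerset, (if p t ∧ m ∉ t then f t else 0) =
      ∑ t ∈ (range m).powerset, if p t then f t else 0 := by
  rw [range_add_one, sum_powerset_insert notMem_range_self]
  simp only [mem_insert_self, not_true_eq_false, and_false, if_false, sum_const_zero, add_zero]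
  refine sum_congr rfl fun t ht => ?_
  simp [notMem_of_mem_powerset_of_notMem ht notMem_range_self]

def NoTwoConsecutive (t : Finset ℕ) : Prop := ∀ i ∈ t, i + 1 ∉ t

instance : DecidablePred NoTwoConsecutive := fun t =>
  inferInstanceAs (Decidable (∀ i ∈ t, i + 1 ∉ t))

noncomputable def pathIndepPoly (m : ℕ) : ℤ[X] :=
  ∑ t ∈ (range m).powerset with NoTwoConsecutive t, X ^ #t

theorem pathIndepPoly_eq_sum_ite (m : ℕ) :
    pathIndepPoly m = ∑ t ∈ (range m).powerset, if NoTwoConsecutive t then X ^ #t else 0 :=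
  sum_filter _ _

theorem noTwoConsecutive_insert {m : ℕ} {t : Finset ℕ} (ht : t ⊆ range (m + 1)) :
    NoTwoConsecutive (insert (m + 1) t) ↔ NoTwoConsecutive t ∧ m ∉ t := by
  simp only [NoTwoConsecutive, mem_insert, forall_eq_or_imp, add_left_inj]
  grind

theorem pathIndepPoly_add_two (m : ℕ) :
    pathIndepPoly (m + 2) = pathIndepPoly (m + 1) + X * pathIndepPoly m := by
  rw [pathIndepPoly_eq_sum_ite, range_add_one, sum_powerset_insert notMem_range_self,
    ← pathIndepPoly_eq_sum_ite]
  congr 1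
  have hins : ∀ t ∈ (range (m + 1)).powerset,
      (if NoTwoConsecutive (insert (m + 1) t) then (X : ℤ[X]) ^ #(insert (m + 1) t) else 0) =
        if NoTwoConsecutive t ∧ m ∉ t then X * X ^ #t else 0 := fun t ht => by
    rw [mem_powerset] at ht
    have hm : m + 1 ∉ t := fun h => by simpa using ht h
    simp only [noTwoConsecutive_insert ht, card_insert_of_notMem hm, pow_succ']
  rw [sum_congr rfl hins, sum_powerset_range_add_one_ite_notMem, pathIndepPoly_eq_sum_ite, mul_sum]
  simp only [mul_ite, mul_zero]

theorem pathIndepPoly_eq_hoggattLong (m : ℕ) : pathIndepPoly m = hoggattLong 1 X (m + 2) := by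
  induction m using Nat.twoStepInduction with
  | zero => simp [pathIndepPoly_eq_sum_ite, NoTwoConsecutive, hoggattLong]
  | one =>
    rw [pathIndepPoly_eq_sum_ite, show (range 1).powerset = {∅, {0}} by decide]
    simp [NoTwoConsecutive, hoggattLong, add_comm]
  | more m ih₀ ih₁ =>
    rw [pathIndepPoly_add_two, ih₀, ih₁, hoggattLong.eq_3 _ _ (m + 2)]
    ring

theorem sum_noTwoConsecutive_zero_notMem (m : ℕ) :
    ∑ t ∈ (range (m + 1)).powerset, (if NoTwoConsecutive t ∧ 0 ∉ t then (X : ℤ[X]) ^ #t else 0) =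
      pathIndepPoly m := by
  rw [show range (m + 1) = insert 0 ((range m).map (addRightEmbedding 1)) from range_add_one' m,
    sum_powerset_insert (by simp), sum_powerset_map, pathIndepPoly_eq_sum_ite]
  have hmap (t : Finset ℕ) :
      NoTwoConsecutive (t.map (addRightEmbedding 1)) ↔ NoTwoConsecutive t := by
    simp [NoTwoConsecutive]
  simp [hmap]

theorem sum_noTwoConsecutive_cyclic (k : ℕ) :
    ∑ t ∈ (range (k + 3)).powerset,
        (if NoTwoConsecutive t ∧ (k + 2 ∈ t → 0 ∉ t) then (X : ℤ[X]) ^ #t else 0) =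
      pathIndepPoly (k + 2) + X * pathIndepPoly k := by
  rw [range_add_one, sum_powerset_insert notMem_range_self, pathIndepPoly_eq_sum_ite]
  congr 1
  · refine sum_congr rfl fun t ht => ?_
    simp [notMem_of_mem_powerset_of_notMem ht notMem_range_self]
  have hins : ∀ t ∈ (range (k + 2)).powerset,
      (if NoTwoConsecutive (insert (k + 2) t) ∧ (k + 2 ∈ insert (k + 2) t → 0 ∉ insert (k + 2) t)
        then (X : ℤ[X]) ^ #(insert (k + 2) t) else 0) =
        if (NoTwoConsecutive t ∧ 0 ∉ t) ∧ k + 1 ∉ t then X * X ^ #t else 0 := fun t ht => by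
    rw [mem_powerset] at ht
    have hk : k + 2 ∉ t := fun h => by simpa using ht h
    simp only [noTwoConsecutive_insert ht, card_insert_of_notMem hk, pow_succ', mem_insert_self,
      mem_insert, forall_const]
    grind
  rw [sum_congr rfl hins, sum_powerset_range_add_one_ite_notMem,
    ← sum_noTwoConsecutive_zero_notMem, mul_sum]
  simp only [mul_ite, mul_zero]

open scoped Fin.NatCast in
theorem Fin.forall_of_imp_add_one {n : ℕ} [NeZero n] {P : Fin n → Prop}
    (h : ∀ i, P i → P (i + 1)) {a : Fin n} (ha : P a) (b : Fin n) : P b := by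
  have hadd (t : ℕ) : P (a + t) := by
    induction t with
    | zero => simpa using ha
    | succ t ih => simpa [add_assoc] using h _ ih
  simpa using hadd (b - a).val

section CyclicIndep

variable {n : ℕ} [NeZero n] {M M₁ M₂ : Finset (Fin n)}

def IsCyclicIndep (M : Finset (Fin n)) : Prop := ∀ i ∈ M, i + 1 ∉ M

instance : DecidablePred (IsCyclicIndep (n := n)) := fun M =>
  inferInstanceAs (Decidable (∀ i ∈ M, i + 1 ∉ M))

variable (n) in
def cyclicIndepSets : Finset (Finset (Fin n)) := univ.powerset.filter IsCyclicIndep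

theorem mem_cyclicIndepSets : M ∈ cyclicIndepSets n ↔ IsCyclicIndep M := by
  simp [cyclicIndepSets]

variable (n) in
noncomputable def cycleIndepPoly : ℤ[X] := ∑ M ∈ cyclicIndepSets n, X ^ #M

theorem isCyclicIndep_iff_noTwoConsecutive {m : ℕ} (M : Finset (Fin (m + 1))) :
    IsCyclicIndep M ↔ NoTwoConsecutive (M.map Fin.valEmbedding) ∧
      (m ∈ M.map Fin.valEmbedding → 0 ∉ M.map Fin.valEmbedding) := by
  have hlast : m ∈ M.map Fin.valEmbedding ↔ Fin.last m ∈ M :=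
    mem_map' (s := M) (a := Fin.last m) _
  have hzero : 0 ∈ M.map Fin.valEmbedding ↔ 0 ∈ M := mem_map' (s := M) (a := 0) _
  have hsucc (i : Fin (m + 1)) :
      i.val + 1 ∈ M.map Fin.valEmbedding ↔ i ≠ Fin.last m ∧ i + 1 ∈ M := by
    by_cases hil : i = Fin.last m
    · simp only [hil, Fin.val_last, mem_map, Fin.valEmbedding_apply, ne_eq, not_true_eq_false,
        false_and, iff_false, not_exists, not_and]
      exact fun j _ => (Fin.is_lt j).ne
    · have hval : (i + 1).val = i.val + 1 := by rw [Fin.val_add_one, if_neg hil]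
      rw [← hval, ← Fin.valEmbedding_apply, mem_map' Fin.valEmbedding]
      exact ⟨fun h => ⟨hil, h⟩, And.right⟩
  simp only [IsCyclicIndep, NoTwoConsecutive, forall_mem_map, hlast, hzero,
    Fin.valEmbedding_apply, hsucc]
  constructor
  · intro h
    exact ⟨fun i hi hi1 => h i hi hi1.2, fun hl h0 => h _ hl (by simpa using h0)⟩
  · rintro ⟨h, hl⟩ i hi hi1
    by_cases hil : i = Fin.last m
    · subst hil
      exact hl hi (by simpa using hi1)
    · exact h i hi ⟨hil, hi1⟩

theorem cycleIndepPoly_add_three (k : ℕ) :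
    cycleIndepPoly (k + 3) = pathIndepPoly (k + 2) + X * pathIndepPoly k := by
  rw [← sum_noTwoConsecutive_cyclic, ← Nat.Iio_eq_range, ← Fin.map_valEmbedding_univ,
    sum_powerset_map, cycleIndepPoly, cyclicIndepSets, sum_filter]
  simp only [isCyclicIndep_iff_noTwoConsecutive, card_map]

def coveredBy (M : Finset (Fin n)) : Finset (Fin n) := M ∪ M.map (Equiv.addRight 1).toEmbedding

theorem mem_coveredBy {x : Fin n} : x ∈ coveredBy M ↔ x ∈ M ∨ x - 1 ∈ M := by
  simp [coveredBy, mem_map_equiv, sub_eq_add_neg]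

theorem subset_coveredBy : M ⊆ coveredBy M := subset_union_left

theorem IsCyclicIndep.card_coveredBy (hM : IsCyclicIndep M) : #(coveredBy M) = 2 * #M := by
  rw [coveredBy, card_union_of_disjoint, card_map, two_mul]
  refine disjoint_right.2 fun x hx hxM => hM _ (by simpa [mem_map_equiv] using hx) ?_
  simpa using hxM

theorem IsCyclicIndep.add_one_mem_of_coveredBy_eq (h₁ : IsCyclicIndep M₁)
    (hc : coveredBy M₁ = coveredBy M₂) {i : Fin n} (hi₁ : i ∈ M₁) (hi₂ : i ∉ M₂) :
    i + 1 ∈ M₂ ∧ i + 1 ∉ M₁ := by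
  have : i + 1 ∈ coveredBy M₂ := hc ▸ mem_coveredBy.2 (Or.inr (by simpa using hi₁))
  rw [mem_coveredBy, add_sub_cancel_right] at this
  exact ⟨this.resolve_right hi₂, h₁ i hi₁⟩

theorem IsCyclicIndep.coveredBy_eq_univ_of_ne (h₁ : IsCyclicIndep M₁) (h₂ : IsCyclicIndep M₂)
    (hc : coveredBy M₁ = coveredBy M₂) (hne : M₁ ≠ M₂) : coveredBy M₁ = univ := by
  obtain ⟨a, ha⟩ : ∃ a, ¬(a ∈ M₁ ↔ a ∈ M₂) := by simpa [Finset.ext_iff] using hne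
  have hstep (i : Fin n) (hi : ¬(i ∈ M₁ ↔ i ∈ M₂)) : ¬(i + 1 ∈ M₁ ↔ i + 1 ∈ M₂) := by
    by_cases hi₁ : i ∈ M₁
    · have := h₁.add_one_mem_of_coveredBy_eq hc hi₁ (by tauto)
      tauto
    · have := h₂.add_one_mem_of_coveredBy_eq hc.symm (by tauto) hi₁
      tauto
  refine eq_univ_of_forall fun b => ?_
  by_cases hb : b ∈ M₁
  · exact subset_coveredBy hb
  · exact hc ▸ subset_coveredBy (by have := Fin.forall_of_imp_add_one hstep ha b; tauto)

def IsAlternating (M : Finset (Fin n)) : Prop := ∀ i, i + 1 ∈ M ↔ i ∉ M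

theorem isAlternating_iff : IsAlternating M ↔ IsCyclicIndep M ∧ coveredBy M = univ := by
  simp only [IsAlternating, IsCyclicIndep, eq_univ_iff_forall, mem_coveredBy]
  constructor
  · intro h
    refine ⟨fun i hi hi1 => (h i).1 hi1 hi, fun x => ?_⟩
    have := h (x - 1)
    rw [sub_add_cancel] at this
    tauto
  · rintro ⟨hM, hcov⟩ i
    have := hcov (i + 1)
    rw [add_sub_cancel_right] at this
    exact ⟨fun hi1 hi => hM i hi hi1, this.resolve_right⟩

theorem IsAlternating.isCyclicIndep (h : IsAlternating M) : IsCyclicIndep M :=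
  (isAlternating_iff.1 h).1

theorem IsAlternating.coveredBy_eq_univ (h : IsAlternating M) : coveredBy M = univ :=
  (isAlternating_iff.1 h).2

theorem IsAlternating.two_mul_card (h : IsAlternating M) : 2 * #M = n := by
  rw [← h.isCyclicIndep.card_coveredBy, h.coveredBy_eq_univ, card_univ, Fintype.card_fin]

theorem IsAlternating.eq_of_zero_mem_iff (h₁ : IsAlternating M₁) (h₂ : IsAlternating M₂)
    (h0 : 0 ∈ M₁ ↔ 0 ∈ M₂) : M₁ = M₂ :=
  ext (Fin.forall_of_imp_add_one (fun i hi => by rw [h₁ i, h₂ i, hi]) h0)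

theorem IsAlternating.compl (h : IsAlternating M) : IsAlternating Mᶜ := fun i => by
  simp [h i]

variable (n) in
def evens : Finset (Fin n) := univ.filter fun i => Even i.val

theorem isAlternating_evens (hn : Even n) : IsAlternating (evens n) := fun i => by
  simp [evens, Fin.val_add, Nat.add_mod_mod, hn.mod_even_iff, Nat.even_add_one]

theorem evens_ne_compl : evens n ≠ (evens n)ᶜ := fun h => by
  have h0 : (0 : Fin n) ∈ evens n := by simp [evens]
  exact mem_compl.1 (h ▸ h0) h0

theorem IsAlternating.eq_evens_or_eq_compl (hn : Even n) (h : IsAlternating M) :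
    M = evens n ∨ M = (evens n)ᶜ := by
  by_cases h0 : 0 ∈ M
  · exact .inl (h.eq_of_zero_mem_iff (isAlternating_evens hn) (by simp [h0, evens]))
  · exact .inr (h.eq_of_zero_mem_iff (isAlternating_evens hn).compl (by simp [h0, evens]))

theorem IsCyclicIndep.eq_of_coveredBy_eq (hn : Even n) (h₁ : IsCyclicIndep M₁)
    (h₂ : IsCyclicIndep M₂) (h₁o : M₁ ≠ (evens n)ᶜ) (h₂o : M₂ ≠ (evens n)ᶜ)
    (hc : coveredBy M₁ = coveredBy M₂) : M₁ = M₂ := by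
  by_contra hne
  have hu := h₁.coveredBy_eq_univ_of_ne h₂ hc hne
  have halt₁ : IsAlternating M₁ := isAlternating_iff.2 ⟨h₁, hu⟩
  have halt₂ : IsAlternating M₂ := isAlternating_iff.2 ⟨h₂, hc ▸ hu⟩
  rw [(halt₁.eq_evens_or_eq_compl hn).resolve_right h₁o,
    (halt₂.eq_evens_or_eq_compl hn).resolve_right h₂o] at hne
  exact hne rfl

def startEdges (M : Finset (Fin n)) : Finset (Sym2 (Fin n)) := M.image fun i => s(i, i + 1)

theorem covers_startEdges (M : Finset (Fin n)) : Covers (startEdges M) (coveredBy M) := fun x => by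
  simp only [startEdges, mem_image, exists_exists_and_eq_and, Sym2.mem_iff, mem_coveredBy]
  constructor
  · rintro (hx | hx)
    · exact ⟨x, hx, .inl rfl⟩
    · exact ⟨x - 1, hx, .inr (sub_add_cancel x 1).symm⟩
  · rintro ⟨i, hi, rfl | rfl⟩
    · exact .inl hi
    · exact .inr (by simpa using hi)

end CyclicIndep

theorem Covers.unique {E : Finset (Sym2 V)} {S T : Finset V} (hS : Covers E S)
    (hT : Covers E T) : S = T :=
  ext fun x => (hS x).trans (hT x).symm

section CycleGraph

variable {m : ℕ}

theorem mem_edgeSet_cycleGraph {e : Sym2 (Fin (m + 2))} :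
    e ∈ (SimpleGraph.cycleGraph (m + 2)).edgeSet ↔ ∃ i, s(i, i + 1) = e := by
  induction e using Sym2.ind with
  | _ u v =>
    rw [SimpleGraph.mem_edgeSet, SimpleGraph.cycleGraph_adj]
    constructor
    · rintro (h | h)
      · exact ⟨v, by rw [← h, add_sub_cancel, Sym2.eq_swap]⟩
      · exact ⟨u, by rw [← h, add_sub_cancel]⟩
    · rintro ⟨i, hi⟩
      rcases Sym2.eq_iff.1 hi with ⟨rfl, rfl⟩ | ⟨rfl, rfl⟩ <;> simp

theorem isGraphMatching_startEdges {M : Finset (Fin (m + 2))} (hM : IsCyclicIndep M) :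
    IsGraphMatching (SimpleGraph.cycleGraph (m + 2)) (startEdges M) := by
  refine ⟨fun e he => ?_, ?_⟩
  · obtain ⟨i, -, rfl⟩ := mem_image.1 he
    exact mem_edgeSet_cycleGraph.2 ⟨i, rfl⟩
  · simp only [startEdges, mem_image]
    rintro _ ⟨i, hi, rfl⟩ _ ⟨j, hj, rfl⟩ hne x hxi hxj
    rw [Sym2.mem_iff] at hxi hxj
    rcases hxi with rfl | rfl <;> rcases hxj with h | h
    · exact hne (by rw [h])
    · exact hM j hj (h ▸ hi)
    · exact hM i hi (h ▸ hj)
    · exact hne (by rw [add_right_cancel h])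

theorem IsGraphMatching.exists_isCyclicIndep {Me : Finset (Sym2 (Fin (m + 3)))}
    (h : IsGraphMatching (SimpleGraph.cycleGraph (m + 3)) Me) :
    ∃ M, IsCyclicIndep M ∧ startEdges M = Me := by
  obtain ⟨hsub, hdisj⟩ := h
  refine ⟨univ.filter fun i => s(i, i + 1) ∈ Me, fun i hi hi1 => ?_, ?_⟩
  · rw [mem_filter] at hi hi1
    have htwo : (1 + 1 : Fin (m + 3)) ≠ 0 := by simp [Fin.ext_iff, Fin.val_add, Nat.mod_eq_of_lt]
    have hne : s(i, i + 1) ≠ s(i + 1, i + 1 + 1) := by simp [add_assoc, htwo]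
    exact hdisj _ hi.2 _ hi1.2 hne (i + 1) (Sym2.mem_mk_right _ _) (Sym2.mem_mk_left _ _)
  · ext e
    simp only [startEdges, mem_image, mem_filter, mem_univ, true_and]
    constructor
    · rintro ⟨i, hi, rfl⟩
      exact hi
    · intro he
      obtain ⟨i, rfl⟩ := mem_edgeSet_cycleGraph.1 (hsub he)
      exact ⟨i, he, rfl⟩

theorem isPMS_cycleGraph_iff {S : Finset (Fin (m + 3))} :
    IsPMS (SimpleGraph.cycleGraph (m + 3)) S ↔ ∃ M, IsCyclicIndep M ∧ coveredBy M = S := by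
  constructor
  · rintro ⟨Me, hMe, hcov⟩
    obtain ⟨M, hM, rfl⟩ := hMe.exists_isCyclicIndep
    exact ⟨M, hM, (covers_startEdges M).unique hcov⟩
  · rintro ⟨M, hM, rfl⟩
    exact ⟨startEdges M, isGraphMatching_startEdges hM, covers_startEdges M⟩

open Classical in
theorem filter_isPMS_cycleGraph (hn : Even (m + 3)) :
    univ.powerset.filter (IsPMS (SimpleGraph.cycleGraph (m + 3))) =
      ((cyclicIndepSets (m + 3)).erase (evens (m + 3))ᶜ).image coveredBy := by
  have hevens := isAlternating_evens hn
  ext S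
  simp only [mem_filter, mem_powerset, subset_univ, true_and, isPMS_cycleGraph_iff, mem_image,
    mem_erase, mem_cyclicIndepSets]
  constructor
  · rintro ⟨M, hM, rfl⟩
    by_cases hMo : M = (evens (m + 3))ᶜ
    · refine ⟨evens (m + 3), ⟨evens_ne_compl, hevens.isCyclicIndep⟩, ?_⟩
      rw [hMo, hevens.compl.coveredBy_eq_univ, hevens.coveredBy_eq_univ]
    · exact ⟨M, ⟨hMo, hM⟩, rfl⟩
  · rintro ⟨M, ⟨-, hM⟩, rfl⟩
    exact ⟨M, hM, rfl⟩

theorem pmPoly_cycleGraph (hn : Even (m + 3)) :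
    pmPoly (SimpleGraph.cycleGraph (m + 3)) univ = cycleIndepPoly (m + 3) - X ^ ((m + 3) / 2) := by
  classical
  have hodds := (isAlternating_evens hn).compl
  have hinj : Set.InjOn coveredBy ((cyclicIndepSets (m + 3)).erase (evens (m + 3))ᶜ :
      Set (Finset (Fin (m + 3)))) := by
    intro M₁ h₁ M₂ h₂
    simp only [mem_coe, mem_erase, mem_cyclicIndepSets] at h₁ h₂
    exact h₁.2.eq_of_coveredBy_eq hn h₂.2 h₁.1 h₂.1
  have hcard : #(evens (m + 3))ᶜ = (m + 3) / 2 := by have := hodds.two_mul_card; omega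
  rw [pmPoly, ← sum_filter, filter_isPMS_cycleGraph hn, sum_image hinj, cycleIndepPoly, ← hcard,
    ← sum_erase_eq_sub (mem_cyclicIndepSets.2 hodds.isCyclicIndep)]
  refine sum_congr rfl fun M hM => ?_
  rw [(mem_cyclicIndepSets.1 (mem_of_mem_erase hM)).card_coveredBy,
    Nat.mul_div_cancel_left _ two_pos]

end CycleGraph

/-- for even `n ≥ 4`, `p(C_n; z) = u_{n+1}(1, z) + z·u_{n−1}(1, z) − z^{n/2}`. -/
theorem stmt11 (n : ℕ) (hn : 4 ≤ n) (heven : Even n) :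
    pmPoly (SimpleGraph.cycleGraph n) Finset.univ =
      hoggattLong (1 : Polynomial ℤ) X (n + 1) + X * hoggattLong (1 : Polynomial ℤ) X (n - 1) -
        X ^ (n / 2) := by
  obtain ⟨k, rfl⟩ : ∃ k, n = k + 3 := ⟨n - 3, by omega⟩
  rw [pmPoly_cycleGraph heven, cycleIndepPoly_add_three, pathIndepPoly_eq_hoggattLong,
    pathIndepPoly_eq_hoggattLong]
  rfl
end
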